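/- arXiv:2207.03698 — 11 statements merged into one kernel-verified Lean document; each statement's English description precedes it below -/
import Mathlib

section
/- Let G be a group, α a 2-cocycle on G with values in kˣ, and x ∈ G. Then the map λ_α : C_G(x) → kˣ defined by λ_α(g) = α(g,x)·α(x,g)⁻¹ is a group homomorphism. -/
theorem lambda_alpha_isMonoidHom (k : Type*) [Field k] (G : Type*) [Group G]
    (α : G → G → kˣ)
    (hα : ∀ a b c : G, α a b * α (a * b) c = α b c * α a (b * c))
    (x : G) :
    ∃ φ : ↥(Subgroup.centralizer ({x} : Set G)) →* kˣ,
      ∀ g : ↥(Subgroup.centralizer ({x} : Set G)), φ g = α ↑g x * (α x ↑g)⁻¹ := by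
  have h1x : α 1 x = α x 1 := by
    have h1 := hα 1 1 x
    have h2 := hα x 1 1
    simp only [one_mul, mul_one] at h1 h2
    have e1 : α 1 1 = α 1 x := mul_right_cancel h1
    have e2 : α x 1 = α 1 1 := mul_right_cancel h2
    rw [← e1, e2]
  refine ⟨{ toFun := fun g => α ↑g x * (α x ↑g)⁻¹, map_one' := ?_, map_mul' := ?_ },
      fun g => rfl⟩
  · simp only [OneMemClass.coe_one, h1x, mul_inv_cancel]
  · intro g h
    have cg : x * (g : G) = (g : G) * x := by
      have := g.2
      rw [Subgroup.mem_centralizer_iff] at this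
      exact this x (Set.mem_singleton x)
    have ch : x * (h : G) = (h : G) * x := by
      have := h.2
      rw [Subgroup.mem_centralizer_iff] at this
      exact this x (Set.mem_singleton x)
    have e1 := hα ↑g ↑h x
    have e2 := hα ↑g x ↑h
    have e3 := hα x ↑g ↑h
    rw [ch] at e2
    rw [cg] at e3
    have E1 := congrArg (Units.val) e1
    have E2 := congrArg (Units.val) e2
    have E3 := congrArg (Units.val) e3
    push_cast at E1 E2 E3
    have key : α ((g : G) * ↑h) x * α x ↑g * α x ↑h * α ↑g ↑h
        = α ↑g x * α ↑h x * α x ((g : G) * ↑h) * α ↑g ↑h := by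
      rw [Units.ext_iff]
      push_cast
      linear_combination ((α x ↑g : k)) * ((α x ↑h : k)) * E1
        - ((α ↑h x : k)) * ((α x ↑g : k)) * E2 + ((α ↑h x : k)) * ((α ↑g x : k)) * E3
    have key2 : α ((g : G) * ↑h) x * α x ↑g * α x ↑h
        = α ↑g x * α ↑h x * α x ((g : G) * ↑h) := mul_right_cancel key
    have K2 := congrArg (Units.val) key2
    push_cast at K2
    push_cast
    rw [Units.ext_iff]
    push_cast
    field_simp
    linear_combination K2
end

section
/- Let π : Ĝ → G be a surjective group homomorphism whose kernel is contained in the center of Ĝ, and let s : G → Ĝ be a set-theoretic section of π (so π ∘ s = id). Define α : G × G → Ĝ by α(g,h) = s(g)·s(h)·s(gh)⁻¹ (its values lie in ker π). Then for any x ∈ G the following are equivalent: (a) α(g,x) = α(x,g) for all g ∈ C_G(x); (b) the centralizer C_Ĝ(s(x)) of s(x) in Ĝ equals the full preimage π⁻¹(C_G(x)). -/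
theorem alpha_regular_iff_centralizer_preimage
    (Ghat G : Type*) [Group Ghat] [Group G]
    (π : Ghat →* G) (hsurj : Function.Surjective π)
    (hcentral : π.ker ≤ Subgroup.center Ghat)
    (s : G → Ghat) (hs : ∀ g, π (s g) = g)
    (α : G → G → Ghat) (hα : ∀ g h, α g h = s g * s h * (s (g * h))⁻¹)
    (x : G) :
    (∀ g h : G, α g h ∈ π.ker) ∧
    ((∀ g ∈ Subgroup.centralizer ({x} : Set G), α g x = α x g) ↔
      Subgroup.centralizer ({s x} : Set Ghat) =
        (Subgroup.centralizer ({x} : Set G)).comap π) := by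
  constructor
  · intro g h
    simp only [MonoidHom.mem_ker, hα, map_mul, map_inv, hs]
    group
  constructor
  · intro hreg
    ext y
    simp only [Subgroup.mem_centralizer_iff, Set.mem_singleton_iff,
      Subgroup.mem_comap, forall_eq]
    constructor
    · intro hy
      have : π (s x * y) = π (y * s x) := by rw [hy]
      simpa [hs] using this
    · intro hy
      set g := π y with hg
      have hgC : g ∈ Subgroup.centralizer ({x} : Set G) := by
        simp only [Subgroup.mem_centralizer_iff, Set.mem_singleton_iff, forall_eq]
        exact hy
      have hcomm : s g * s x = s x * s g := by
        have := hreg g hgC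
        have hxg : x * g = g * x := by
          simpa [Subgroup.mem_centralizer_iff] using hgC
        rw [hα, hα, ← hxg] at this
        exact mul_right_cancel this
      have hz : (s g)⁻¹ * y ∈ π.ker := by
        simp [MonoidHom.mem_ker, hs, hg]
      have hzc := hcentral hz
      rw [Subgroup.mem_center_iff] at hzc
      have hy' : y = s g * ((s g)⁻¹ * y) := by group
      rw [hy']
      calc s x * (s g * ((s g)⁻¹ * y))
          = (s x * s g) * ((s g)⁻¹ * y) := by group
        _ = (s g * s x) * ((s g)⁻¹ * y) := by rw [hcomm]
        _ = s g * (s x * ((s g)⁻¹ * y)) := by group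
        _ = s g * (((s g)⁻¹ * y) * s x) := by rw [hzc (s x)]
        _ = (s g * ((s g)⁻¹ * y)) * s x := by group
  · intro heq g hg
    have hxg : x * g = g * x := by
      simpa [Subgroup.mem_centralizer_iff] using hg
    have hmem : s g ∈ Subgroup.centralizer ({s x} : Set Ghat) := by
      rw [heq]
      simpa [Subgroup.mem_comap, hs, Subgroup.mem_centralizer_iff] using hxg
    have hcomm : s x * s g = s g * s x := by
      simpa [Subgroup.mem_centralizer_iff] using hmem
    rw [hα, hα, ← hxg, hcomm]
end

section
/- Let C be a finite group, λ : C → kˣ a group homomorphism, and N = ker λ. Let k_λ denote the one-dimensional representation of C on k in which g ∈ C acts as multiplication by λ(g). Then the first group cohomology H¹(C; k_λ) is isomorphic as a k-vector space to the space of group homomorphisms f : N → (k,+) satisfying f(g·n·g⁻¹) = λ(g)·f(n) for all g ∈ C and n ∈ N. -/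
universe u

/-- The one-dimensional representation of `C` on `k` in which `g` acts as
multiplication by `l g`. -/
noncomputable def oneDimRep (k : Type u) [CommRing k] (C : Type u) [Group C]
    (l : C →* kˣ) : Rep k C :=
  Rep.of
    ({ toFun := fun g => (l g : k) • (LinearMap.id : k →ₗ[k] k)
       map_one' := by ext; simp
       map_mul' := fun g h => by
         ext
         simp [mul_comm] } : Representation k C k)

/-- The `k`-vector space of group homomorphisms `f : N → (k, +)` satisfying
`f (g n g⁻¹) = l g * f n` for all `g : C` and `n ∈ N`. -/
def equivariantHoms (k : Type*) [Field k] {C : Type*} [Group C] (l : C →* kˣ)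
    (N : Subgroup C) : Submodule k (↥N → k) where
  carrier := {f | (∀ a b : ↥N, f (a * b) = f a + f b) ∧
    ∀ (g : C) (n m : ↥N), (m : C) = g * ↑n * g⁻¹ → f m = (l g : k) * f n}
  add_mem' := fun hf hg =>
    ⟨fun a b => by simp [hf.1 a b, hg.1 a b]; ring,
     fun g n m h => by simp [hf.2 g n m h, hg.2 g n m h, mul_add]⟩
  zero_mem' := ⟨fun a b => by simp, fun g n m h => by simp⟩
  smul_mem' := fun c f hf =>
    ⟨fun a b => by simp [hf.1 a b, mul_add],
     fun g n m h => by simp [hf.2 g n m h]; ring⟩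

namespace H1IsoAux

open groupCohomology

variable {k : Type u} [Field k] {C : Type u} [Group C] (l : C →* kˣ)

/-- The value of a one-cocycle, as an element of `k`. -/
noncomputable def cval (f : cocycles₁ (oneDimRep k C l)) (g : C) : k := f g

lemma cval_mul (f : cocycles₁ (oneDimRep k C l)) (g h : C) :
    cval l f (g * h) = (l g : k) * cval l f h + cval l f g :=
  (mem_cocycles₁_iff (A := oneDimRep k C l) f).1 f.2 g h

lemma cval_one (f : cocycles₁ (oneDimRep k C l)) : cval l f 1 = 0 :=
  cocycles₁_map_one f

lemma cval_inv (f : cocycles₁ (oneDimRep k C l)) (g : C) :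
    (l g : k) * cval l f g⁻¹ = - cval l f g := by
  have h := cval_mul l f g g⁻¹
  have h1 : g * g⁻¹ = 1 := by group
  rw [h1, cval_one] at h
  linear_combination -h

lemma lker_coe (n : ↥l.ker) : (l (n : C) : k) = 1 := by
  have hn : l (n : C) = 1 := MonoidHom.mem_ker.1 n.2
  rw [hn, Units.val_one]

lemma res_mem (f : cocycles₁ (oneDimRep k C l)) :
    (fun n : ↥l.ker => cval l f n) ∈ equivariantHoms k l l.ker := by
  refine ⟨fun a b => ?_, fun g n m hm => ?_⟩
  · have h := cval_mul l f a b
    rw [lker_coe] at h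
    simpa [add_comm] using h
  · have h1 := cval_mul l f g ((n : C) * g⁻¹)
    have h2 := cval_mul l f (n : C) g⁻¹
    have h3 := cval_inv l f g
    rw [lker_coe] at h2
    have hm' : (m : C) = g * ((n : C) * g⁻¹) := by rw [hm]; group
    rw [← hm'] at h1
    simp only [one_mul] at h2
    show cval l f m = (l g : k) * cval l f n
    rw [h1, h2]
    linear_combination h3
    

/-- Restriction of a one-cocycle to the kernel of `l`. -/
noncomputable def resHom : cocycles₁ (oneDimRep k C l) →ₗ[k] equivariantHoms k l l.ker where
  toFun f := ⟨fun n => cval l f n, res_mem l f⟩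
  map_add' f g := rfl
  map_smul' c f := rfl

lemma mem_oneCoboundaries_of (f : cocycles₁ (oneDimRep k C l)) (x : k)
    (h : ∀ g : C, (l g : k) * x - x = cval l f g) :
    (f : C → k) ∈ coboundaries₁ (oneDimRep k C l) :=
  ⟨x, funext fun g => h g⟩

lemma ker_resHom [Fintype (C ⧸ l.ker)]
    (hcard : ((Fintype.card (C ⧸ l.ker) : k)) ≠ 0) :
    LinearMap.ker (resHom l) =
      (coboundaries₁ (oneDimRep k C l)).comap (cocycles₁ (oneDimRep k C l)).subtype := by
  ext f
  simp only [LinearMap.mem_ker]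
  constructor
  · intro hf
    have hres : ∀ n : ↥l.ker, cval l f n = 0 := by
      intro n
      have h := congrFun (congrArg Subtype.val hf) n
      exact h
    have hcoset : ∀ g g' : C, ((g : C ⧸ l.ker)) = (g' : C ⧸ l.ker) →
        cval l f g = cval l f g' := by
      intro g g' h
      have hn : g⁻¹ * g' ∈ l.ker := QuotientGroup.eq.mp h
      have h2 := cval_mul l f g (g⁻¹ * g')
      have h3 : cval l f (g⁻¹ * g') = 0 := hres ⟨_, hn⟩
      rw [h3] at h2
      have h4 : g * (g⁻¹ * g') = g' := by group
      rw [h4] at h2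
      simpa using h2.symm
    set S : k := ∑ q : C ⧸ l.ker, cval l f q.out with hS
    have key : ∀ g : C,
        S = (l g : k) * S + (Fintype.card (C ⧸ l.ker) : k) * cval l f g := by
      intro g
      have h1 : ∀ q : C ⧸ l.ker,
          cval l f (((g : C ⧸ l.ker) * q).out) = cval l f (g * q.out) := by
        intro q
        apply hcoset
        simp [QuotientGroup.out_eq']
      calc S = ∑ q : C ⧸ l.ker, cval l f (((g : C ⧸ l.ker) * q).out) :=
            (Fintype.sum_bijective (fun q => (g : C ⧸ l.ker) * q)
              (Group.mulLeft_bijective _) _ _ (fun q => rfl)).symm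
        _ = ∑ q : C ⧸ l.ker, cval l f (g * q.out) :=
            Finset.sum_congr rfl (fun q _ => h1 q)
        _ = ∑ q : C ⧸ l.ker, ((l g : k) * cval l f q.out + cval l f g) :=
            Finset.sum_congr rfl (fun q _ => cval_mul l f g q.out)
        _ = (l g : k) * S + (Fintype.card (C ⧸ l.ker) : k) * cval l f g := by
            rw [Finset.sum_add_distrib, ← Finset.mul_sum]
            simp [Finset.card_univ, nsmul_eq_mul]
            exact hS.symm
    refine mem_oneCoboundaries_of l f
      ((Fintype.card (C ⧸ l.ker) : k)⁻¹ * (-S)) (fun g => ?_)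
    have hk := key g
    have h5 : (Fintype.card (C ⧸ l.ker) : k) * cval l f g = S - (l g : k) * S := by
      linear_combination -hk
    calc (l g : k) * ((Fintype.card (C ⧸ l.ker) : k)⁻¹ * (-S)) -
          (Fintype.card (C ⧸ l.ker) : k)⁻¹ * (-S)
        = (Fintype.card (C ⧸ l.ker) : k)⁻¹ *
            ((Fintype.card (C ⧸ l.ker) : k) * cval l f g) := by rw [h5]; ring
      _ = cval l f g := by rw [← mul_assoc, inv_mul_cancel₀ hcard, one_mul]
  · intro hb
    obtain ⟨x, hx⟩ := hb
    have hx' : ∀ g : C, (l g : k) * (show k from x) - (show k from x) = cval l f g :=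
      fun g => congrFun hx g
    apply Subtype.ext
    funext n
    have h := hx' (n : C)
    rw [lker_coe] at h
    show cval l f n = 0
    linear_combination h.symm


section Surj

variable (f0 : ↥l.ker → k)

/-- The "kernel part" of `g`, relative to coset representatives. -/
noncomputable def nn (g : C) : ↥l.ker :=
  ⟨((g : C ⧸ l.ker)).out⁻¹ * g, by
    have h : ((((g : C ⧸ l.ker)).out⁻¹ * g : C) : C ⧸ l.ker) = 1 := by
      simp [QuotientGroup.out_eq']
    exact (QuotientGroup.eq_one_iff _).1 h⟩

/-- The two-cocycle of kernel elements measuring failure of `Quotient.out` to be a section. -/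
noncomputable def mm (q r : C ⧸ l.ker) : ↥l.ker :=
  ⟨(q * r).out⁻¹ * (q.out * r.out), by
    have h : (((q * r).out⁻¹ * (q.out * r.out) : C) : C ⧸ l.ker) = 1 := by
      simp only [QuotientGroup.mk_mul, QuotientGroup.mk_inv, QuotientGroup.out_eq']
      group
    exact (QuotientGroup.eq_one_iff _).1 h⟩

noncomputable def mu (q r : C ⧸ l.ker) : k :=
  ((QuotientGroup.kerLift l q * QuotientGroup.kerLift l r : kˣ) : k) * f0 (mm l q r)

noncomputable def psi [Fintype (C ⧸ l.ker)] (q : C ⧸ l.ker) : k :=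
  (Fintype.card (C ⧸ l.ker) : k)⁻¹ * ∑ u : C ⧸ l.ker, mu l f0 q u

noncomputable def ff [Fintype (C ⧸ l.ker)] (g : C) : k :=
  (l g : k) * f0 (nn l g) + psi l f0 (g : C ⧸ l.ker)

lemma Lam_out (q : C ⧸ l.ker) : l q.out = QuotientGroup.kerLift l q := by
  conv_rhs => rw [← QuotientGroup.out_eq' q]
  rw [QuotientGroup.kerLift_mk]

lemma Lam_mk (g : C) : QuotientGroup.kerLift l (g : C ⧸ l.ker) = l g :=
  QuotientGroup.kerLift_mk l g

variable {l}
variable (hadd : ∀ a b : ↥l.ker, f0 (a * b) = f0 a + f0 b)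
variable (hconj : ∀ (g : C) (n m : ↥l.ker), (m : C) = g * ↑n * g⁻¹ →
    f0 m = (l g : k) * f0 n)

include hadd in
lemma f0_one : f0 1 = 0 := by
  have h := hadd 1 1
  rw [mul_one] at h
  linear_combination -h

include hadd in
lemma f0_inv (a : ↥l.ker) : f0 a⁻¹ = - f0 a := by
  have h := hadd a⁻¹ a
  rw [inv_mul_cancel, f0_one f0 hadd] at h
  linear_combination -h

include hadd hconj in
lemma nn_mul (g h : C) :
    ∃ B : k, f0 (nn l (g * h)) = f0 (mm l g h) + B + f0 (nn l h) ∧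
      f0 (nn l g) = ((QuotientGroup.kerLift l (h : C ⧸ l.ker) : kˣ) : k) * B := by
  set s : C ⧸ l.ker := (g : C ⧸ l.ker)
  set t : C ⧸ l.ker := (h : C ⧸ l.ker)
  have hN : (l.ker).Normal := MonoidHom.normal_ker l
  have hbmem : t.out⁻¹ * ↑(nn l g) * t.out ∈ l.ker := by
    have := hN.conj_mem (nn l g : C) (nn l g).2 t.out⁻¹
    simpa using this
  set b : ↥l.ker := ⟨t.out⁻¹ * ↑(nn l g) * t.out, hbmem⟩ with hbdef
  have e2 : (mm l s t : C) = (s * t).out⁻¹ * (s.out * t.out) := rfl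
  have e3 : (b : C) = t.out⁻¹ * ↑(nn l g) * t.out := rfl
  have e4 : (nn l g : C) = s.out⁻¹ * g := rfl
  have e5 : (nn l h : C) = t.out⁻¹ * h := rfl
  have hsub : nn l (g * h) = mm l s t * b * nn l h := by
    apply Subtype.ext
    simp only [Subgroup.coe_mul]
    have e1 : (nn l (g * h) : C) = ((g * h : C) : C ⧸ l.ker).out⁻¹ * (g * h) := rfl
    have hmk : ((g * h : C) : C ⧸ l.ker) = s * t := by
      simp [s, t]
    rw [e1, e2, e3, e4, e5, hmk]
    group
  refine ⟨f0 b, ?_, ?_⟩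
  · rw [hsub, hadd, hadd]
  · have h1 : f0 (nn l g) = (l t.out : k) * f0 b := by
      apply hconj t.out b (nn l g)
      rw [e3]
      group
    rw [h1, Lam_out]

include hadd hconj in
lemma mu_cocycle (s t u : C ⧸ l.ker) :
    mu l f0 (s * t) u + mu l f0 s t =
      mu l f0 s (t * u) + ((QuotientGroup.kerLift l s : kˣ) : k) * mu l f0 t u := by
  have hN : (l.ker).Normal := MonoidHom.normal_ker l
  have hcmem : u.out⁻¹ * ↑(mm l s t) * u.out ∈ l.ker := by
    have := hN.conj_mem (mm l s t : C) (mm l s t).2 u.out⁻¹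
    simpa using this
  set cc : ↥l.ker := ⟨u.out⁻¹ * ↑(mm l s t) * u.out, hcmem⟩ with hccdef
  have e2 : (mm l s t : C) = (s * t).out⁻¹ * (s.out * t.out) := rfl
  have e3 : (cc : C) = u.out⁻¹ * ↑(mm l s t) * u.out := rfl
  have hsub : mm l (s * t) u * cc = mm l s (t * u) * mm l t u := by
    apply Subtype.ext
    simp only [Subgroup.coe_mul]
    have ea : (mm l (s * t) u : C) = (s * t * u).out⁻¹ * ((s * t).out * u.out) := rfl
    have eb : (mm l s (t * u) : C) = (s * (t * u)).out⁻¹ * (s.out * (t * u).out) := rfl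
    have ec : (mm l t u : C) = (t * u).out⁻¹ * (t.out * u.out) := rfl
    have he : s * t * u = s * (t * u) := mul_assoc s t u
    rw [ea, eb, ec, e3, e2, he]
    group
  have h := congrArg f0 hsub
  rw [hadd, hadd] at h
  have hcc : f0 (mm l s t) = (l u.out : k) * f0 cc := by
    apply hconj u.out cc (mm l s t)
    rw [e3]
    group
  rw [Lam_out] at hcc
  simp only [mu, Units.val_mul, map_mul]
  set A := ((QuotientGroup.kerLift l s : kˣ) : k)
  set Bv := ((QuotientGroup.kerLift l t : kˣ) : k)
  set U := ((QuotientGroup.kerLift l u : kˣ) : k)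
  set F1 := f0 (mm l (s * t) u)
  set F3 := f0 (mm l s (t * u))
  set F4 := f0 (mm l t u)
  -- h : F1 + f0 cc = F3 + F4, hcc : f0 (mm l s t) = U * f0 cc
  linear_combination (A * Bv * U) * h + (A * Bv) * hcc

include hadd hconj in
lemma psi_identity [Fintype (C ⧸ l.ker)]
    (hcard : ((Fintype.card (C ⧸ l.ker) : k)) ≠ 0) (s t : C ⧸ l.ker) :
    psi l f0 s + ((QuotientGroup.kerLift l s : kˣ) : k) * psi l f0 t =
      psi l f0 (s * t) + mu l f0 s t := by
  have hsum : ∀ q : C ⧸ l.ker,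
      (Fintype.card (C ⧸ l.ker) : k) * psi l f0 q = ∑ u : C ⧸ l.ker, mu l f0 q u := by
    intro q
    rw [psi, ← mul_assoc, mul_inv_cancel₀ hcard, one_mul]
  have hshift : ∑ u : C ⧸ l.ker, mu l f0 s (t * u) = ∑ u : C ⧸ l.ker, mu l f0 s u :=
    Fintype.sum_bijective (fun u => t * u) (Group.mulLeft_bijective t) _ _ (fun u => rfl)
  have hA : ∑ u : C ⧸ l.ker, mu l f0 (s * t) u +
      (Fintype.card (C ⧸ l.ker) : k) * mu l f0 s t =
      ∑ u : C ⧸ l.ker, mu l f0 s u +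
        ((QuotientGroup.kerLift l s : kˣ) : k) * ∑ u : C ⧸ l.ker, mu l f0 t u := by
    calc ∑ u : C ⧸ l.ker, mu l f0 (s * t) u +
          (Fintype.card (C ⧸ l.ker) : k) * mu l f0 s t
        = ∑ u : C ⧸ l.ker, (mu l f0 (s * t) u + mu l f0 s t) := by
          rw [Finset.sum_add_distrib, Finset.sum_const, Finset.card_univ, nsmul_eq_mul]
      _ = ∑ u : C ⧸ l.ker, (mu l f0 s (t * u) +
            ((QuotientGroup.kerLift l s : kˣ) : k) * mu l f0 t u) :=
          Finset.sum_congr rfl (fun u _ => mu_cocycle f0 hadd hconj s t u)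
      _ = ∑ u : C ⧸ l.ker, mu l f0 s (t * u) +
            ((QuotientGroup.kerLift l s : kˣ) : k) * ∑ u : C ⧸ l.ker, mu l f0 t u := by
          rw [Finset.sum_add_distrib, Finset.mul_sum]
      _ = _ := by rw [hshift]
  apply mul_left_cancel₀ hcard
  have h1 := hsum s
  have h2 := hsum t
  have h3 := hsum (s * t)
  linear_combination -hA - h3 + h1 + ((QuotientGroup.kerLift l s : kˣ) : k) * h2

include hadd hconj in
lemma ff_cocycle [Fintype (C ⧸ l.ker)]
    (hcard : ((Fintype.card (C ⧸ l.ker) : k)) ≠ 0) (g h : C) :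
    ff l f0 (g * h) = (l g : k) * ff l f0 h + ff l f0 g := by
  obtain ⟨B, h3, hb⟩ := nn_mul f0 hadd hconj g h
  have h6 := psi_identity f0 hadd hconj hcard (g : C ⧸ l.ker) (h : C ⧸ l.ker)
  have hmk : ((g * h : C) : C ⧸ l.ker) = (g : C ⧸ l.ker) * (h : C ⧸ l.ker) :=
    QuotientGroup.mk_mul _ g h
  have hl : (l (g * h) : k) = (l g : k) * (l h : k) := by
    rw [map_mul, Units.val_mul]
  have hlg : ((QuotientGroup.kerLift l (g : C ⧸ l.ker) : kˣ) : k) = (l g : k) := by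
    rw [Lam_mk]
  have hlh : ((QuotientGroup.kerLift l (h : C ⧸ l.ker) : kˣ) : k) = (l h : k) := by
    rw [Lam_mk]
  have hmu : mu l f0 (g : C ⧸ l.ker) (h : C ⧸ l.ker) =
      (l g : k) * (l h : k) * f0 (mm l (g : C ⧸ l.ker) (h : C ⧸ l.ker)) := by
    rw [mu, Units.val_mul, hlg, hlh]
  rw [hlh] at hb
  rw [hlg] at h6
  simp only [ff]
  rw [hmk, hl, h3]
  linear_combination -h6 - hmu - (l g : k) * hb

/-- The distinguished kernel element given by the representative of the trivial coset. -/
noncomputable def ee : ↥l.ker :=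
  ⟨(1 : C ⧸ l.ker).out, by
    have h : (((1 : C ⧸ l.ker).out : C) : C ⧸ l.ker) = 1 := QuotientGroup.out_eq' 1
    exact (QuotientGroup.eq_one_iff _).1 h⟩

include hadd hconj in
lemma mu_one (u : C ⧸ l.ker) : mu l f0 1 u = f0 (ee (l := l)) := by
  have e2 : (mm l 1 u : C) = (1 * u).out⁻¹ * ((1 : C ⧸ l.ker).out * u.out) := rfl
  have hfe : f0 (ee (l := l)) = (l u.out : k) * f0 (mm l 1 u) := by
    apply hconj u.out (mm l 1 u) (ee (l := l))
    show ((1 : C ⧸ l.ker).out : C) = _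
    rw [e2, one_mul]
    group
  have h1 : QuotientGroup.kerLift l (1 : C ⧸ l.ker) = 1 := map_one _
  rw [mu, h1, one_mul, ← Lam_out, hfe]

include hadd hconj in
lemma ff_res [Fintype (C ⧸ l.ker)]
    (hcard : ((Fintype.card (C ⧸ l.ker) : k)) ≠ 0) (n0 : ↥l.ker) :
    ff l f0 (n0 : C) = f0 n0 := by
  have hmk1 : ((n0 : C) : C ⧸ l.ker) = 1 := (QuotientGroup.eq_one_iff _).2 n0.2
  have hnn : nn l (n0 : C) = (ee (l := l))⁻¹ * n0 := by
    apply Subtype.ext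
    show (((n0 : C) : C ⧸ l.ker)).out⁻¹ * (n0 : C) = _
    rw [hmk1]
    rfl
  have hpsi1 : psi l f0 (1 : C ⧸ l.ker) = f0 (ee (l := l)) := by
    rw [psi]
    have : ∑ u : C ⧸ l.ker, mu l f0 1 u =
        (Fintype.card (C ⧸ l.ker) : k) * f0 (ee (l := l)) := by
      rw [Finset.sum_congr rfl (fun u _ => mu_one f0 hadd hconj u)]
      rw [Finset.sum_const, Finset.card_univ, nsmul_eq_mul]
    rw [this, ← mul_assoc, inv_mul_cancel₀ hcard, one_mul]
  rw [ff, hmk1, hpsi1, lker_coe, one_mul, hnn, hadd, f0_inv f0 hadd]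
  ring

end Surj

lemma resHom_surjective [Fintype (C ⧸ l.ker)]
    (hcard : ((Fintype.card (C ⧸ l.ker) : k)) ≠ 0) :
    Function.Surjective (resHom l) := by
  rintro ⟨f0, hadd, hconj⟩
  have hmem : (show C → k from ff l f0) ∈ cocycles₁ (oneDimRep k C l) :=
    (mem_cocycles₁_iff (A := oneDimRep k C l) (show C → k from ff l f0)).2
      (fun g h => ff_cocycle f0 hadd hconj hcard g h)
  refine ⟨⟨show C → k from ff l f0, hmem⟩, ?_⟩
  apply Subtype.ext
  funext n0
  exact ff_res f0 hadd hconj hcard n0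

end H1IsoAux

theorem H1_iso_equivariantHoms
    (p : ℕ) [Fact p.Prime] (k : Type u) [Field k] [IsAlgClosed k] [CharP k p]
    (C : Type u) [Group C] [Fintype C] (l : C →* kˣ) :
    Nonempty (groupCohomology.H1 (oneDimRep k C l) ≃ₗ[k] equivariantHoms k l l.ker) := by
  classical
  haveI : Fintype (C ⧸ l.ker) := Fintype.ofFinite _
  have hcard : ((Fintype.card (C ⧸ l.ker) : k)) ≠ 0 := by
    intro h0
    have hp : p ∣ Fintype.card (C ⧸ l.ker) := (CharP.cast_eq_zero_iff k p _).1 h0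
    obtain ⟨q, hq⟩ := exists_prime_orderOf_dvd_card p hp
    have hinj := QuotientGroup.kerLift_injective l
    have horder : orderOf (QuotientGroup.kerLift l q) = p := by
      rw [orderOf_injective _ hinj, hq]
    set x := QuotientGroup.kerLift l q with hxdef
    have hxp : x ^ p = 1 := by rw [← horder]; exact pow_orderOf_eq_one x
    have hkx : ((x : k) - 1) ^ p = 0 := by
      rw [sub_pow_char]
      have : ((x : k)) ^ p = ((x ^ p : kˣ) : k) := by rw [Units.val_pow_eq_pow_val]
      rw [this, hxp, Units.val_one, one_pow, sub_self]
    have hx1 : (x : k) = 1 := by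
      have hsub : (x : k) - 1 = 0 :=
        pow_eq_zero_iff (Fact.out (p := p.Prime)).ne_zero |>.1 hkx
      have := sub_eq_zero.1 hsub
      simpa using this
    have : x = 1 := Units.ext hx1
    rw [this, orderOf_one] at horder
    exact (Fact.out (p := p.Prime)).ne_one horder.symm
  have hker := H1IsoAux.ker_resHom l hcard
  have hsurj := H1IsoAux.resHom_surjective l hcard
  have hπsurj : Function.Surjective (groupCohomology.H1π (oneDimRep k C l)).hom :=
    fun x => groupCohomology.H1_induction_on x fun y => ⟨y, rfl⟩
  have hπker : LinearMap.ker (groupCohomology.H1π (oneDimRep k C l)).hom =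
      LinearMap.ker (H1IsoAux.resHom l) := by
    rw [hker]
    ext y
    simp only [LinearMap.mem_ker, Submodule.mem_comap]
    exact groupCohomology.H1π_eq_zero_iff y
  exact ⟨((groupCohomology.H1π (oneDimRep k C l)).hom.quotKerEquivOfSurjective hπsurj).symm.trans
    ((Submodule.quotEquivOfEq _ _ hπker).trans
    ((H1IsoAux.resHom l).quotKerEquivOfSurjective hsurj))⟩
end

section
/- Let π : Ĝ → G be a surjective homomorphism of finite groups whose kernel Z is central in Ĝ and cyclic of order m, and let x ∈ G have order coprime to m. Then there exists a preimage x̂ ∈ π⁻¹(x) whose order equals the order of x, and for such a preimage x̂ one has C_Ĝ(x̂) = π⁻¹(C_G(x)). -/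
theorem coprime_order_lift
    (Ghat G : Type*) [Group Ghat] [Group G] [Fintype Ghat] [Fintype G]
    (π : Ghat →* G) (hsurj : Function.Surjective π)
    (hcentral : π.ker ≤ Subgroup.center Ghat)
    (hcyc : IsCyclic ↥π.ker) (m : ℕ) (hm : Nat.card ↥π.ker = m)
    (x : G) (hx : Nat.Coprime (orderOf x) m) :
    ∃ xhat : Ghat, π xhat = x ∧ orderOf xhat = orderOf x ∧
      ∀ x' : Ghat, π x' = x → orderOf x' = orderOf x →
        Subgroup.centralizer ({x'} : Set Ghat) =
          (Subgroup.centralizer ({x} : Set G)).comap π := by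
  set n := orderOf x with hn
  -- every element of the kernel has m-th power 1
  have hker : ∀ z ∈ π.ker, z ^ m = 1 := by
    intro z hz
    have h1 : (⟨z, hz⟩ : π.ker) ^ m = 1 := by
      rw [← hm]; exact pow_card_eq_one'
    have h2 := congrArg (Subgroup.subtype π.ker) h1
    simpa using h2
  -- the centralizer statement, for any good lift x'
  have hcent : ∀ x' : Ghat, π x' = x → orderOf x' = n →
      Subgroup.centralizer ({x'} : Set Ghat) =
        (Subgroup.centralizer ({x} : Set G)).comap π := by
    intro x' hpx hox
    ext c
    rw [Subgroup.mem_comap, Subgroup.mem_centralizer_iff, Subgroup.mem_centralizer_iff]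
    simp only [Set.mem_singleton_iff, forall_eq]
    constructor
    · intro hc
      have := congrArg π hc
      simpa [map_mul, hpx] using this
    · intro hc
      set w := c * x' * c⁻¹ with hw
      have hpw : π w = x := by
        have : π c * x * (π c)⁻¹ = x := by
          rw [← hc]; group
        simpa [hw, map_mul, hpx] using this
      set z := x'⁻¹ * w with hzdef
      have hz : z ∈ π.ker := by
        simp [MonoidHom.mem_ker, hzdef, map_mul, hpx, hpw]
      have hzc : ∀ g : Ghat, g * z = z * g := fun g =>
        Subgroup.mem_center_iff.mp (hcentral hz) g
      have hxz : x' * z = w := by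
        rw [hzdef]; group
      have hcommute : Commute x' z := hzc x'
      have hwo : orderOf w = n := by
        have hsc : SemiconjBy c x' w := by
          simp only [SemiconjBy, hw]; group
        rw [← hsc.orderOf_eq c, hox]
      have hwn : w ^ n = 1 := by
        rw [← hwo]; exact pow_orderOf_eq_one w
      have hzn : z ^ n = 1 := by
        have hx'n : x' ^ n = 1 := by rw [← hox]; exact pow_orderOf_eq_one x'
        have := hcommute.mul_pow n
        rw [hxz, hwn, hx'n, one_mul] at this
        exact this.symm
      have hzm : z ^ m = 1 := hker z hz
      have hz1 : z = 1 := by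
        rw [← orderOf_eq_one_iff]
        have h1 : orderOf z ∣ n := orderOf_dvd_of_pow_eq_one hzn
        have h2 : orderOf z ∣ m := orderOf_dvd_of_pow_eq_one hzm
        have h3 : orderOf z ∣ Nat.gcd n m := Nat.dvd_gcd h1 h2
        rw [hx] at h3
        exact Nat.dvd_one.mp h3
      have hwx : w = x' := by rw [← hxz, hz1, mul_one]
      have : c * x' * c⁻¹ = x' := by rw [← hw, hwx]
      calc x' * c = (c * x' * c⁻¹) * c := by rw [this]
        _ = c * x' := by group
  -- construct the lift
  obtain ⟨y, hy⟩ := hsurj x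
  have hyn : y ^ n ∈ π.ker := by
    simp [MonoidHom.mem_ker, map_pow, hy, hn, pow_orderOf_eq_one]
  have hynm : y ^ (n * m) = 1 := by
    rw [pow_mul]; exact hker _ hyn
  obtain ⟨a, b, hab⟩ := Nat.isCoprime_iff_coprime.mpr hx
  refine ⟨y ^ (b * (m : ℤ)), ?_, ?_, hcent⟩
  · have hxn : x ^ (n : ℤ) = 1 := by
      rw [zpow_natCast, hn]; exact pow_orderOf_eq_one x
    have : π (y ^ (b * (m : ℤ))) = x ^ (b * (m : ℤ)) := by
      rw [map_zpow, hy]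
    rw [this]
    calc x ^ (b * (m : ℤ)) = x ^ ((n : ℤ) * a) * x ^ (b * (m : ℤ)) := by
          rw [zpow_mul x (n : ℤ) a, hxn, one_zpow, one_mul]
      _ = x ^ ((n : ℤ) * a + b * (m : ℤ)) := by rw [zpow_add]
      _ = x ^ (1 : ℤ) := by rw [mul_comm (n:ℤ) a, hab]
      _ = x := zpow_one x
  · have hpxhat : π (y ^ (b * (m : ℤ))) = x := by
      have hxn : x ^ (n : ℤ) = 1 := by
        rw [zpow_natCast, hn]; exact pow_orderOf_eq_one x
      rw [map_zpow, hy]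
      calc x ^ (b * (m : ℤ)) = x ^ ((n : ℤ) * a) * x ^ (b * (m : ℤ)) := by
            rw [zpow_mul x (n : ℤ) a, hxn, one_zpow, one_mul]
        _ = x ^ ((n : ℤ) * a + b * (m : ℤ)) := by rw [zpow_add]
        _ = x ^ (1 : ℤ) := by rw [mul_comm (n:ℤ) a, hab]
        _ = x := zpow_one x
    have h1 : (y ^ (b * (m : ℤ))) ^ n = 1 := by
      rw [← zpow_natCast, ← zpow_mul]
      have : b * (m : ℤ) * n = ((n * m : ℕ) : ℤ) * b := by push_cast; ring
      rw [this, zpow_mul, zpow_natCast, hynm, one_zpow]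
    have h2 : orderOf (y ^ (b * (m : ℤ))) ∣ n := orderOf_dvd_of_pow_eq_one h1
    have h3 : n ∣ orderOf (y ^ (b * (m : ℤ))) := by
      rw [hn, ← hpxhat]
      exact orderOf_map_dvd π _
    exact Nat.dvd_antisymm h2 h3
end

section
/- Let G be a finite group and x ∈ G an element whose order is a power of p. Then for every 2-cocycle α on G with values in kˣ and every g ∈ C_G(x), one has α(g,x) = α(x,g); that is, every p-element of G is α-regular for every 2-cocycle α. -/
theorem pElement_alpha_regular
    (p : ℕ) [Fact p.Prime] (k : Type*) [Field k] [IsAlgClosed k] [CharP k p]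
    (G : Type*) [Group G] [Fintype G]
    (x : G) (hx : ∃ n : ℕ, orderOf x = p ^ n)
    (α : G → G → kˣ)
    (hα : ∀ a b c : G, α a b * α (a * b) c = α b c * α a (b * c))
    (g : G) (hg : g ∈ Subgroup.centralizer ({x} : Set G)) :
    α g x = α x g := by
  obtain ⟨n, hn⟩ := hx
  rw [Subgroup.mem_centralizer_singleton_iff] at hg
  have hc : g * x = x * g := hg
  -- α a 1 = α 1 a = α 1 1
  have h1l : ∀ a : G, α a 1 = α 1 1 := by
    intro a
    have := hα a 1 1
    simp only [mul_one, one_mul] at this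
    exact mul_right_cancel this
  have h1r : ∀ a : G, α 1 a = α 1 1 := by
    intro a
    have := hα 1 1 a
    simp only [mul_one, one_mul] at this
    exact (mul_right_cancel this).symm
  -- key multiplicativity identity (in k)
  have key : ∀ a b c : G, a * b = b * a → a * c = c * a →
      (α a (b * c) : k) * α b a * α c a = α a b * α a c * α (b * c) a := by
    intro a b c hab hac
    have h1 := congrArg (Units.val) (hα a b c)
    have h2 := congrArg (Units.val) (hα b a c)
    have h3 := congrArg (Units.val) (hα b c a)
    push_cast at h1 h2 h3
    rw [← hab, hac] at h2
    have hC : (α b c : k) ≠ 0 := Units.ne_zero _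
    refine mul_left_cancel₀ hC ?_
    linear_combination (-(α b a : k) * α c a) * h1 +
      ((α a b : k) * α c a) * h2 + (-(α a b : k) * α a c) * h3
  -- main induction
  have main : ∀ m : ℕ, (α g (x ^ m) : k) * ((α x g : k)) ^ m =
      ((α g x : k)) ^ m * α (x ^ m) g := by
    intro m
    induction m with
    | zero => simp [pow_zero, h1l g, h1r g]
    | succ m ih =>
      have hgx : g * x ^ m = x ^ m * g := (Commute.pow_right (by exact hc) m)
      have K := key g (x ^ m) x hgx hc
      have hI : (α (x ^ m) g : k) ≠ 0 := Units.ne_zero _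
      rw [pow_succ]
      have goal' : (α g (x ^ m * x) : k) * ((α x g : k)) ^ (m + 1) =
          ((α g x : k)) ^ (m + 1) * α (x ^ m * x) g := by
        refine mul_left_cancel₀ hI ?_
        linear_combination ((α x g : k) ^ m) * K +
          ((α g x : k) * (α (x ^ m * x) g : k)) * ih
      simpa [pow_succ] using goal'
  -- evaluate at m = orderOf x
  have hx1 : x ^ (p ^ n) = 1 := by rw [← hn]; exact pow_orderOf_eq_one x
  have heq := main (p ^ n)
  rw [hx1, h1l g, h1r g] at heq
  have h0 : (α 1 1 : k) ≠ 0 := Units.ne_zero _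
  have hpow : ((α x g : k)) ^ (p ^ n) = ((α g x : k)) ^ (p ^ n) :=
    mul_left_cancel₀ h0 (by linear_combination heq)
  have hsub : ((α g x : k) - (α x g : k)) ^ (p ^ n) = 0 := by
    rw [sub_pow_char_pow, hpow, sub_self]
  have hne : p ^ n ≠ 0 := pow_ne_zero n (Nat.Prime.ne_zero Fact.out)
  exact Units.ext (sub_eq_zero.mp ((pow_eq_zero_iff hne).mp hsub))
end

section
/- Let G be a finite group and x ∈ G an element such that the centralizer C_G(x) is cyclic, or is a p-group, or has all of its Sylow subgroups cyclic. Then for every 2-cocycle α on G with values in kˣ and every g ∈ C_G(x), one has α(g,x) = α(x,g); that is, x is α-regular for every 2-cocycle α. -/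
set_option linter.unusedSectionVars false
section aux
variable {k : Type*} [Field k] {G : Type*} [Group G]

def fb (α : G → G → kˣ) (a b : G) : kˣ := α a b / α b a

lemma fb_mul_left (α : G → G → kˣ) (hα : ∀ a b c : G, α a b * α (a * b) c = α b c * α a (b * c))
    {a b y : G} (ha : Commute a y) (hb : Commute b y) :
    fb α (a * b) y = fb α a y * fb α b y := by
  have e1 := hα a b y
  have e2 := hα a y b
  have e3 := hα y a b
  rw [hb.eq] at e1
  rw [ha.eq] at e2
  unfold fb
  rw [div_mul_div_comm, div_eq_div_iff_mul_eq_mul]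
  have E1 := congrArg Units.val e1
  have E2 := congrArg Units.val e2
  have E3 := congrArg Units.val e3
  simp only [Units.val_mul] at E1 E2 E3
  have hne : ((α a b : k) * (α (y*a) b : k)) ≠ 0 :=
    mul_ne_zero (Units.ne_zero _) (Units.ne_zero _)
  rw [Units.ext_iff]
  apply mul_right_cancel₀ hne
  simp only [Units.val_mul]
  linear_combination (α (y*a) b : k) * (α y a : k) * (α y b : k) * E1
    - (α y a : k) * (α b y : k) * (α (y*a) b : k) * E2
    + (α b y : k) * (α a y : k) * (α (y*a) b : k) * E3

lemma fb_self (α : G → G → kˣ) (a : G) : fb α a a = 1 := div_self' _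

lemma fb_swap (α : G → G → kˣ) (a b : G) : fb α a b = (fb α b a)⁻¹ := by
  unfold fb; rw [inv_div]

lemma fb_one_left (α : G → G → kˣ) (hα : ∀ a b c : G, α a b * α (a * b) c = α b c * α a (b * c))
    (y : G) : fb α 1 y = 1 := by
  have h := fb_mul_left α hα (Commute.one_left y) (Commute.one_left y)
  rw [one_mul] at h
  have : (1 : kˣ) * fb α 1 y = fb α 1 y * fb α 1 y := by rw [one_mul]; exact h
  exact (mul_right_cancel this).symm

lemma fb_pow_left (α : G → G → kˣ) (hα : ∀ a b c : G, α a b * α (a * b) c = α b c * α a (b * c))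
    {a y : G} (ha : Commute a y) (n : ℕ) : fb α (a ^ n) y = fb α a y ^ n := by
  induction n with
  | zero => simpa using fb_one_left α hα y
  | succ m ih =>
      rw [pow_succ, fb_mul_left α hα (ha.pow_left m) ha, ih, pow_succ]

lemma fb_pow_right (α : G → G → kˣ) (hα : ∀ a b c : G, α a b * α (a * b) c = α b c * α a (b * c))
    {a y : G} (ha : Commute a y) (n : ℕ) : fb α a (y ^ n) = fb α a y ^ n := by
  rw [fb_swap, fb_pow_left α hα ha.symm n, fb_swap α a y, inv_pow]

lemma fb_inv_left (α : G → G → kˣ) (hα : ∀ a b c : G, α a b * α (a * b) c = α b c * α a (b * c))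
    {a y : G} (ha : Commute a y) : fb α a⁻¹ y = (fb α a y)⁻¹ := by
  have h := fb_mul_left α hα ha ha.inv_left
  rw [mul_inv_cancel, fb_one_left α hα] at h
  exact (inv_eq_of_mul_eq_one_right h.symm).symm

lemma fb_zpow_left (α : G → G → kˣ) (hα : ∀ a b c : G, α a b * α (a * b) c = α b c * α a (b * c))
    {a y : G} (ha : Commute a y) (n : ℤ) : fb α (a ^ n) y = fb α a y ^ n := by
  cases n with
  | ofNat m => simpa using fb_pow_left α hα ha m
  | negSucc m =>
      rw [zpow_negSucc, fb_inv_left α hα (ha.pow_left (m+1)), fb_pow_left α hα ha, zpow_negSucc]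

lemma fb_zpow_right (α : G → G → kˣ) (hα : ∀ a b c : G, α a b * α (a * b) c = α b c * α a (b * c))
    {a y : G} (ha : Commute a y) (n : ℤ) : fb α a (y ^ n) = fb α a y ^ n := by
  rw [fb_swap, fb_zpow_left α hα ha.symm n, fb_swap α a y, inv_zpow]

lemma unit_eq_one_of_pow_char {p : ℕ} [Fact p.Prime] [CharP k p] {u : kˣ} {n : ℕ}
    (h : u ^ p ^ n = 1) : u = 1 := by
  have hk : (u : k) ^ p ^ n = 1 := by
    have := congrArg Units.val h
    simpa using this
  have h2 : ((u : k) - 1) ^ p ^ n = 0 := by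
    rw [sub_pow_char_pow, hk, one_pow, sub_self]
  have h3 : (u : k) - 1 = 0 := by
    exact pow_eq_zero_iff (pow_ne_zero _ (Nat.Prime.ne_zero Fact.out)) |>.mp h2
  exact Units.ext (by simpa using sub_eq_zero.mp h3)
end aux

theorem alpha_regular_of_cyclic_or_pGroup_or_cyclicSylows
    (p : ℕ) [Fact p.Prime] (k : Type*) [Field k] [IsAlgClosed k] [CharP k p]
    (G : Type*) [Group G] [Fintype G] (x : G)
    (hC : IsCyclic ↥(Subgroup.centralizer ({x} : Set G)) ∨
      IsPGroup p ↥(Subgroup.centralizer ({x} : Set G)) ∨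
      ∀ (q : ℕ) [Fact q.Prime] (Q : Sylow q ↥(Subgroup.centralizer ({x} : Set G))),
        IsCyclic ↥(Q : Subgroup ↥(Subgroup.centralizer ({x} : Set G))))
    (α : G → G → kˣ)
    (hα : ∀ a b c : G, α a b * α (a * b) c = α b c * α a (b * c))
    (g : G) (hg : g ∈ Subgroup.centralizer ({x} : Set G)) :
    α g x = α x g := by
  set C := Subgroup.centralizer ({x} : Set G) with hCdef
  have hgx : Commute g x := (Subgroup.mem_centralizer_iff.mp hg x rfl).symm
  have hx : x ∈ C := Subgroup.mem_centralizer_iff.mpr (by rintro y rfl; rfl)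
  suffices h : fb α g x = 1 by
    have := div_eq_one.mp h
    exact this
  rcases hC with h1 | h2 | h3
  · -- cyclic case
    obtain ⟨c, hc⟩ := h1.exists_generator
    obtain ⟨i, hi⟩ := Subgroup.mem_zpowers_iff.mp (hc ⟨x, hx⟩)
    obtain ⟨j, hj⟩ := Subgroup.mem_zpowers_iff.mp (hc ⟨g, hg⟩)
    have hcx : Commute (c : G) x := (Subgroup.mem_centralizer_iff.mp c.2 x rfl).symm
    have hxi : x = (c : G) ^ i := by
      have := congrArg (Subtype.val) hi
      rw [SubgroupClass.coe_zpow] at this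
      exact this.symm
    have hgj : g = (c : G) ^ j := by
      have := congrArg (Subtype.val) hj
      rw [SubgroupClass.coe_zpow] at this
      exact this.symm
    have hcc : Commute (c : G) ((c : G) ^ i) := (Commute.refl _).zpow_right i
    rw [hxi, hgj, fb_zpow_left α hα hcc, fb_zpow_right α hα (Commute.refl _),
      fb_self, one_zpow, one_zpow]
  · -- p-group case
    obtain ⟨n, hn⟩ := h2 ⟨g, hg⟩
    have hgpow : g ^ p ^ n = 1 := by
      have := congrArg (Subtype.val) hn
      simpa using this
    have : fb α g x ^ p ^ n = 1 := by
      rw [← fb_pow_left α hα hgx, hgpow, fb_one_left α hα]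
    exact unit_eq_one_of_pow_char this
  · -- cyclic Sylow case
    by_contra hne
    set u := fb α g x with hu
    set s := orderOf g with hs
    set t := orderOf x with ht
    have hs0 : s ≠ 0 := (orderOf_pos g).ne'
    have ht0 : t ≠ 0 := (orderOf_pos x).ne'
    have hus : u ^ s = 1 := by
      rw [hu, ← fb_pow_left α hα hgx, pow_orderOf_eq_one, fb_one_left α hα]
    have hut : u ^ t = 1 := by
      rw [hu, ← fb_pow_right α hα hgx, pow_orderOf_eq_one]
      rw [fb_swap, fb_one_left α hα, inv_one]
    have hordu : orderOf u ≠ 1 := by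
      intro h
      exact hne (orderOf_eq_one_iff.mp h)
    obtain ⟨q, hq, hqdvd⟩ := Nat.exists_prime_and_dvd hordu
    haveI : Fact q.Prime := ⟨hq⟩
    set a := s.factorization q with ha
    set b := t.factorization q with hb
    set g1 := g ^ (s / q ^ a) with hg1
    set x1 := x ^ (t / q ^ b) with hx1
    have hg1q : g1 ^ q ^ a = 1 := by
      rw [hg1, ← pow_mul, Nat.div_mul_cancel (Nat.ordProj_dvd s q), hs, pow_orderOf_eq_one]
    have hx1q : x1 ^ q ^ b = 1 := by
      rw [hx1, ← pow_mul, Nat.div_mul_cancel (Nat.ordProj_dvd t q), ht, pow_orderOf_eq_one]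
    have hcomm1 : Commute g1 x1 := hgx.pow_pow _ _
    have hu1 : fb α g1 x1 = u ^ ((s / q ^ a) * (t / q ^ b)) := by
      rw [hg1, hx1, fb_pow_left α hα (hgx.pow_right _), fb_pow_right α hα hgx, ← pow_mul, ← hu, Nat.mul_comm]
    have hne1 : fb α g1 x1 ≠ 1 := by
      rw [hu1]
      intro h
      have hdvd := orderOf_dvd_of_pow_eq_one h
      have hq1 : q ∣ (s / q ^ a) * (t / q ^ b) := hqdvd.trans hdvd
      rcases (Nat.Prime.dvd_mul hq).mp hq1 with h' | h'
      · exact Nat.not_dvd_ordCompl hq hs0 h'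
      · exact Nat.not_dvd_ordCompl hq ht0 h'
    apply hne1
    -- both g1 x1 lie in C
    have hg1C : g1 ∈ C := pow_mem hg _
    have hx1C : x1 ∈ C := pow_mem hx _
    set gg : C := ⟨g1, hg1C⟩ with hgg
    set xh : C := ⟨x1, hx1C⟩ with hxh
    have hcomm2 : Commute gg xh := Subtype.ext hcomm1.eq
    set H := Subgroup.closure ({gg, xh} : Set C) with hH
    have hsub : ({gg, xh} : Set C) ⊆ Subgroup.centralizer ({gg, xh} : Set C) := by
      rintro z hz
      rw [SetLike.mem_coe, Subgroup.mem_centralizer_iff]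
      rintro w hw
      rcases hz with rfl | hz
      · rcases hw with rfl | hw
        · rfl
        · rcases hw with rfl
          exact hcomm2.symm.eq
      · rcases hz with rfl
        rcases hw with rfl | hw
        · exact hcomm2.eq
        · rcases hw with rfl
          rfl
    have hcent : H ≤ Subgroup.centralizer ({gg, xh} : Set C) :=
      (Subgroup.closure_le _).mpr hsub
    have hHcomm : ∀ h₁ ∈ H, ∀ h₂ ∈ H, Commute h₁ h₂ := by
      intro h₁ hh₁ h₂ hh₂
      have h1c := Subgroup.mem_centralizer_iff.mp (hcent hh₁)
      have : ({gg, xh} : Set C) ⊆ (Subgroup.centralizer {h₁} : Subgroup C) := by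
        rintro z hz
        rw [SetLike.mem_coe, Subgroup.mem_centralizer_iff]
        rintro w rfl
        exact (h1c z hz).symm
      have := (Subgroup.closure_le _).mpr this hh₂
      exact Subgroup.mem_centralizer_iff.mp this h₁ rfl
    have hHp : IsPGroup q ↥H := by
      rintro ⟨h, hh⟩
      have : ∃ n : ℕ, h ^ q ^ n = 1 := by
        refine Subgroup.closure_induction ?_ ?_ ?_ ?_ hh
        · rintro z (rfl | hz)
          · exact ⟨a, Subtype.ext (by simpa using hg1q)⟩
          · rcases hz with rfl
            exact ⟨b, Subtype.ext (by simpa using hx1q)⟩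
        · exact ⟨0, by simp⟩
        · rintro y z hy hz ⟨m, hm⟩ ⟨n, hn⟩
          refine ⟨m + n, ?_⟩
          have hyz : Commute y z := hHcomm y hy z hz
          rw [hyz.mul_pow, pow_add, pow_mul, hm, one_pow, one_mul, mul_comm (q^m), pow_mul, hn, one_pow]
        · rintro y hy ⟨m, hm⟩
          exact ⟨m, by rw [inv_pow, hm, inv_one]⟩
      obtain ⟨n, hn⟩ := this
      exact ⟨n, Subtype.ext (by simpa using hn)⟩
    obtain ⟨Q, hHQ⟩ := hHp.exists_le_sylow
    haveI := h3 q Q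
    obtain ⟨c, hc⟩ := (h3 q Q).exists_generator
    have hggQ : gg ∈ (Q : Subgroup C) := hHQ (Subgroup.subset_closure (by simp))
    have hxhQ : xh ∈ (Q : Subgroup C) := hHQ (Subgroup.subset_closure (by simp))
    obtain ⟨i, hi⟩ := Subgroup.mem_zpowers_iff.mp (hc ⟨gg, hggQ⟩)
    obtain ⟨j, hj⟩ := Subgroup.mem_zpowers_iff.mp (hc ⟨xh, hxhQ⟩)
    set c₀ : G := ((c : C) : G) with hc₀
    have hgi : g1 = c₀ ^ i := by
      have h1 := congrArg (Subtype.val) hi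
      rw [SubgroupClass.coe_zpow] at h1
      have h2 := congrArg (Subtype.val) h1
      rw [SubgroupClass.coe_zpow] at h2
      exact h2.symm
    have hxj : x1 = c₀ ^ j := by
      have h1 := congrArg (Subtype.val) hj
      rw [SubgroupClass.coe_zpow] at h1
      have h2 := congrArg (Subtype.val) h1
      rw [SubgroupClass.coe_zpow] at h2
      exact h2.symm
    have hcc : Commute c₀ (c₀ ^ j) := (Commute.refl _).zpow_right j
    rw [hgi, hxj, fb_zpow_left α hα hcc, fb_zpow_right α hα (Commute.refl _),
      fb_self, one_zpow, one_zpow]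
end

section
/- Let C be a finite abelian group whose order is divisible by p, and let λ : C → kˣ be a group homomorphism. Let k_λ denote the one-dimensional representation of C on k in which g ∈ C acts as multiplication by λ(g). Then H¹(C; k_λ) ≠ 0 if and only if λ is the trivial homomorphism. -/
universe u

open groupCohomology
private lemma exists_addHom_aux (p : ℕ) [Fact p.Prime] (V : Type u) [AddCommGroup V]
    [Module (ZMod p) V] {q : V} (hq : q ≠ 0) : ∃ φ : V →+ ZMod p, φ q ≠ 0 := by
  obtain ⟨φ, hφ⟩ : ∃ φ : Module.Dual (ZMod p) V, φ q ≠ 0 := by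
    by_contra h
    push_neg at h
    exact hq ((Module.forall_dual_apply_eq_zero_iff (ZMod p) q).1 h)
  exact ⟨φ.toAddMonoidHom, hφ⟩

theorem H1_ne_zero_iff_trivial
    (p : ℕ) [Fact p.Prime] (k : Type u) [Field k] [IsAlgClosed k] [CharP k p]
    (C : Type u) [CommGroup C] [Fintype C] (hp : p ∣ Fintype.card C)
    (l : C →* kˣ) :
    Nontrivial (groupCohomology.H1 (oneDimRep k C l)) ↔ l = 1 := by
  constructor
  · intro hN
    by_contra hl
    obtain ⟨g₀, hg₀⟩ : ∃ g, l g ≠ 1 := by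
      by_contra h
      push_neg at h
      exact hl (MonoidHom.ext fun g => h g)
    have hu : ((l g₀ : k) - 1) ≠ 0 :=
      sub_ne_zero.2 fun h => hg₀ (Units.ext (by simpa using h))
    have htop : ∀ f : cocycles₁ (oneDimRep k C l),
        (f : C → _) ∈ coboundaries₁ (oneDimRep k C l) := by
      intro f
      refine (fun ⟨x, hx⟩ => ⟨x, funext fun g => by rw [d₀₁_hom_apply]; exact hx g⟩ :
        (∃ x : oneDimRep k C l, ∀ g : C, (oneDimRep k C l).ρ g x - x = f g) →
          (f : C → _) ∈ coboundaries₁ (oneDimRep k C l)) ?_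
      let f' : C → k := fun c => show k from f c
      have hc : ∀ a b : C, f' (a * b) = (l a : k) * f' b + f' a :=
        (mem_cocycles₁_iff (A := oneDimRep k C l) (f : C → _)).1 f.2
      suffices h' : ∃ x : k, ∀ g : C, (l g : k) * x - x = f' g from h'
      refine ⟨f' g₀ / ((l g₀ : k) - 1), fun h => ?_⟩
      have key : (l g₀ : k) * f' h + f' g₀ = (l h : k) * f' g₀ + f' h := by
        have h1 := hc g₀ h
        have h2 := hc h g₀
        rw [mul_comm g₀ h, h2] at h1
        exact h1.symm
      have hrw : (l h : k) * (f' g₀ / ((l g₀ : k) - 1)) - f' g₀ / ((l g₀ : k) - 1)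
          = (((l h : k) - 1) * f' g₀) / ((l g₀ : k) - 1) := by ring
      rw [hrw, div_eq_iff hu]
      linear_combination -key
    haveI : Subsingleton (groupCohomology.H1 (oneDimRep k C l)) :=
      subsingleton_of_forall_eq 0 fun a =>
        H1_induction_on a fun x => (H1π_eq_zero_iff x).2 (htop x)
    exact absurd hN (not_nontrivial _)
  · intro hl
    subst hl
    haveI : (oneDimRep k C 1).IsTrivial := ⟨fun g => by ext; simp [oneDimRep]; rfl⟩
    set P : Subgroup C := (powMonoidHom p : C →* C).range with hP
    obtain ⟨g, hg⟩ := exists_prime_orderOf_dvd_card p hp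
    have hgne : g ≠ 1 := by
      intro h
      rw [h, orderOf_one] at hg
      exact (Fact.out : p.Prime).one_lt.ne' hg.symm
    obtain ⟨c₀, hc₀⟩ : ∃ c : C, c ∉ P := by
      by_contra h
      push_neg at h
      have hsurj : Function.Surjective (powMonoidHom p : C →* C) := fun c => h c
      have hinj : Function.Injective (powMonoidHom p : C →* C) :=
        Finite.injective_iff_surjective.2 hsurj
      exact hgne (hinj (by simp [powMonoidHom, ← hg, pow_orderOf_eq_one]))
    have hmod : ∀ x : Additive (C ⧸ P), p • x = 0 := by
      intro x
      have hx : Additive.toMul x ^ p = 1 := by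
        induction' (Additive.toMul x) using QuotientGroup.induction_on with c
        rw [← QuotientGroup.mk_pow]
        exact (QuotientGroup.eq_one_iff _).2 ⟨c, rfl⟩
      rw [← Additive.toMul.injective.eq_iff]
      simpa using hx
    set q : Additive (C ⧸ P) := Additive.ofMul (QuotientGroup.mk c₀ : C ⧸ P) with hq
    have hqne : q ≠ 0 := fun h =>
      hc₀ ((QuotientGroup.eq_one_iff c₀).1 (Additive.ofMul.injective h))
    obtain ⟨φ, hφ⟩ :=
      @exists_addHom_aux p _ (Additive (C ⧸ P)) _ (AddCommGroup.zmodModule hmod) q hqne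
    let F : Additive C →+ k :=
      ((ZMod.castHom (dvd_refl p) k).toAddMonoidHom.comp φ).comp
        (MonoidHom.toAdditive (QuotientGroup.mk' P))
    have hF : F ≠ 0 := by
      intro h
      apply hφ
      have h1 := DFunLike.congr_fun h (Additive.ofMul c₀)
      simp only [F, AddMonoidHom.coe_comp, Function.comp_apply, AddMonoidHom.zero_apply] at h1
      have h0 : (ZMod.castHom (dvd_refl p) k) (φ q) = (ZMod.castHom (dvd_refl p) k) 0 := by
        rw [map_zero]
        exact h1
      exact (ZMod.castHom (dvd_refl p) k).injective h0
    haveI : Nontrivial (Additive C →+ oneDimRep k C 1) := ⟨⟨F, 0, hF⟩⟩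
    exact @Equiv.nontrivial _ (Additive C →+ oneDimRep k C 1) (H1IsoOfIsTrivial (oneDimRep k C 1)).toLinearEquiv.toEquiv this
end

section
/- Let G be a finite group and x ∈ G an element of p-power order with x not contained in the derived subgroup of C_G(x) (a strong Non-Schur element). Then for every 2-cocycle α on G with values in kˣ, x is α-regular (α(g,x) = α(x,g) for all g ∈ C_G(x)), and there exists a nontrivial group homomorphism from C_G(x) to the additive group (k,+). -/
lemma cocycle_one_one {k G : Type*} [Field k] [Group G] (α : G → G → kˣ)
    (hc : ∀ a b c : G, α a b * α (a * b) c = α b c * α a (b * c)) :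
    (∀ g : G, α 1 g = α 1 1) ∧ (∀ g : G, α g 1 = α 1 1) := by
  constructor
  · intro g
    have := hc 1 1 g
    simp only [one_mul] at this
    exact (mul_right_cancel this).symm
  · intro g
    have := hc g 1 1
    simp only [mul_one, one_mul] at this
    exact mul_right_cancel this

lemma ratio_pow {k G : Type*} [Field k] [Group G] (α : G → G → kˣ)
    (hc : ∀ a b c : G, α a b * α (a * b) c = α b c * α a (b * c))
    (x g : G) (hg : x * g = g * x) :
    ∀ m : ℕ, ((α g (x ^ m) : k) / (α (x ^ m) g : k)) = ((α g x : k) / (α x g : k)) ^ m := by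
  have hcomm : ∀ m : ℕ, x ^ m * g = g * x ^ m := fun m => (Commute.pow_left hg m)
  intro m
  induction m with
  | zero =>
    simp only [pow_zero]
    rw [(cocycle_one_one α hc).1 g, (cocycle_one_one α hc).2 g, div_self (Units.ne_zero _)]
  | succ m ih =>
    have hx3 : x * x ^ m = x ^ (m + 1) := (pow_succ' x m).symm
    have E1' : (α g x : k) * α (g * x) (x ^ m) = α x (x ^ m) * α g (x ^ (m+1)) := by
      have := congrArg (Units.val (α := k)) (hc g x (x ^ m))
      rw [hx3] at this
      exact_mod_cast this
    have E2' : (α x (x ^ m) : k) * α (x ^ (m+1)) g = α (x ^ m) g * α x (x ^ m * g) := by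
      have := congrArg (Units.val (α := k)) (hc x (x ^ m) g)
      rw [hx3] at this
      exact_mod_cast this
    have E3' : (α x g : k) * α (x * g) (x ^ m) = α g (x ^ m) * α x (g * x ^ m) := by
      exact_mod_cast congrArg (Units.val (α := k)) (hc x g (x ^ m))
    rw [hg] at E3'
    rw [hcomm m] at E2'
    have h1 : (α g x : k) ≠ 0 := Units.ne_zero _
    have h2 : (α x g : k) ≠ 0 := Units.ne_zero _
    have h3 : (α x (x ^ m) : k) ≠ 0 := Units.ne_zero _
    have h4 : (α (x^m) g : k) ≠ 0 := Units.ne_zero _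
    have h5 : (α g (x^m) : k) ≠ 0 := Units.ne_zero _
    have h6 : (α x (g * x ^ m) : k) ≠ 0 := Units.ne_zero _
    have h7 : (α (x^(m+1)) g : k) ≠ 0 := Units.ne_zero _
    rw [pow_succ ((α g x : k) / (α x g : k)) m, ← ih]
    -- express α g (x^(m+1)) and α (x^(m+1)) g
    have eg : (α g (x ^ (m+1)) : k) = (α g x : k) * α (g*x) (x^m) / α x (x^m) := by
      rw [eq_div_iff h3]; linear_combination -E1'
    have eh : (α (x ^ (m+1)) g : k) = (α (x^m) g : k) * α x (g * x^m) / α x (x^m) := by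
      rw [eq_div_iff h3]; linear_combination E2'
    have eg2 : (α (g*x) (x^m) : k) = (α g (x^m) : k) * α x (g * x^m) / α x g := by
      rw [eq_div_iff h2]; linear_combination E3'
    rw [eg, eg2, eh]
    field_simp


lemma exists_addHom_ne_zero (p : ℕ) [Fact p.Prime] (k : Type*) [Field k] [CharP k p]
    (M : Type*) [AddCommGroup M] [Module (ZMod p) M] [Nontrivial M] :
    ∃ φ : M →+ k, ∃ v, φ v ≠ 0 := by
  let B := Module.Basis.ofVectorSpace (ZMod p) M
  obtain ⟨i⟩ := B.index_nonempty
  refine ⟨((ZMod.castHom dvd_rfl k).toAddMonoidHom.comp (B.coord i).toAddMonoidHom), B i, ?_⟩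
  have h1 : B.coord i (B i) = 1 := by simp [Module.Basis.coord_apply, Module.Basis.repr_self]
  simp [h1]

section Part2
variable {H : Type*} [Group H] [Finite H]

lemma part2 (p : ℕ) [Fact p.Prime] (k : Type*) [Field k] [CharP k p]
    (y : H) (hyo : ∃ n : ℕ, orderOf y = p ^ n) (hy : y ∉ commutator H) :
    ∃ f : H → k, (∀ a b, f (a * b) = f a + f b) ∧ ∃ a, f a ≠ 0 := by
  classical
  set A := Abelianization H
  have hp : p.Prime := Fact.out
  -- image of y in abelianization is nontrivial of p-power order
  set a : A := Abelianization.of y with ha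
  have ha1 : a ≠ 1 := by
    intro h
    exact hy ((QuotientGroup.eq_one_iff y).mp h)
  obtain ⟨n, hn⟩ := hyo
  have hdvd : orderOf a ∣ p ^ n := by
    rw [← hn]; exact orderOf_map_dvd _ y
  obtain ⟨m, hmn, hm⟩ := (Nat.dvd_prime_pow hp).mp hdvd
  have hm0 : m ≠ 0 := by
    rintro rfl
    simp only [pow_zero] at hm
    exact ha1 (orderOf_eq_one_iff.mp hm)
  -- b has order exactly p
  set b : A := a ^ (p ^ (m - 1)) with hb
  have hbp : b ^ p = 1 := by
    rw [hb, ← pow_mul, ← pow_succ, Nat.sub_add_cancel (Nat.one_le_iff_ne_zero.mpr hm0),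
      ← hm, pow_orderOf_eq_one]
  have hb1 : b ≠ 1 := by
    intro h
    have h2 := orderOf_dvd_of_pow_eq_one (n := p ^ (m-1)) (by rw [← hb, h] : a ^ (p ^ (m-1)) = 1)
    rw [hm] at h2
    have := Nat.le_of_dvd (pow_pos hp.pos _) h2
    exact absurd this (not_le.mpr (Nat.pow_lt_pow_right hp.one_lt (Nat.sub_lt (Nat.pos_of_ne_zero hm0) one_pos)))
  -- p-th power map is not surjective
  have hnotinj : ¬ Function.Injective (powMonoidHom p : A →* A) := by
    intro h
    apply hb1
    apply h
    simpa [powMonoidHom] using hbp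
  have hnotsurj : ¬ Function.Surjective (powMonoidHom p : A →* A) := by
    intro h
    exact hnotinj (Finite.injective_iff_surjective.mpr h)
  obtain ⟨a0, ha0⟩ := not_forall.mp hnotsurj
  have ha0' : a0 ∉ (powMonoidHom p : A →* A).range := by
    intro h; obtain ⟨z, hz⟩ := h; exact ha0 ⟨z, hz⟩
  -- quotient
  set N := (powMonoidHom p : A →* A).range
  set Q := A ⧸ N
  set mkQ : A →* Q := QuotientGroup.mk' N
  have hQ1 : mkQ a0 ≠ 1 := fun h => ha0' ((QuotientGroup.eq_one_iff a0).mp h)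
  have : Nontrivial Q := ⟨mkQ a0, 1, hQ1⟩
  have hQp : ∀ q : Q, q ^ p = 1 := by
    intro q
    obtain ⟨z, rfl⟩ := QuotientGroup.mk'_surjective N q
    rw [← map_pow]
    exact (QuotientGroup.eq_one_iff _).mpr ⟨z, rfl⟩
  -- vector space over ZMod p
  letI : Module (ZMod p) (Additive Q) := AddCommGroup.zmodModule (by
    intro q
    apply Additive.toMul.injective
    rw [toMul_nsmul]
    exact hQp _)
  have : Nontrivial (Additive Q) := ‹Nontrivial Q›
  obtain ⟨φ, v, hφ⟩ := exists_addHom_ne_zero p k (Additive Q)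
  obtain ⟨z, hz⟩ := QuotientGroup.mk'_surjective N (Additive.toMul v)
  obtain ⟨c, hc0⟩ := QuotientGroup.mk_surjective (s := commutator H) z
  have hc : Abelianization.of c = z := hc0
  refine ⟨fun h => φ (Additive.ofMul (mkQ (Abelianization.of h))), ?_, c, ?_⟩
  · intro c d
    simp only [map_mul, ofMul_mul, map_add]
  · show φ (Additive.ofMul (mkQ (Abelianization.of c))) ≠ 0
    rw [hc, hz]
    simpa using hφ
end Part2


theorem strongNonSchur_alpha_regular_and_hom
    (p : ℕ) [Fact p.Prime] (k : Type*) [Field k] [IsAlgClosed k] [CharP k p]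
    (G : Type*) [Group G] [Fintype G]
    (x : G) (hord : ∃ n : ℕ, orderOf x = p ^ n)
    (hx : x ∉ ⁅Subgroup.centralizer ({x} : Set G), Subgroup.centralizer ({x} : Set G)⁆) :
    (∀ α : G → G → kˣ,
      (∀ a b c : G, α a b * α (a * b) c = α b c * α a (b * c)) →
      ∀ g ∈ Subgroup.centralizer ({x} : Set G), α g x = α x g) ∧
    ∃ f : ↥(Subgroup.centralizer ({x} : Set G)) → k,
      (∀ a b, f (a * b) = f a + f b) ∧ ∃ a, f a ≠ 0 := by
  obtain ⟨n, hn⟩ := hord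
  constructor
  · intro α hc g hg
    have hg' : x * g = g * x := (Subgroup.mem_centralizer_iff.mp hg) x rfl
    have key := ratio_pow (k := k) α hc x g hg' (orderOf x)
    rw [pow_orderOf_eq_one, (cocycle_one_one α hc).1 g, (cocycle_one_one α hc).2 g,
      div_self (Units.ne_zero _), hn] at key
    have hone : ((α g x : k) / (α x g : k)) = 1 := by
      have h2 : ((α g x : k) / (α x g : k) - 1) ^ (p ^ n) = 0 := by
        rw [sub_pow_char_pow, ← key, one_pow, sub_self]
      exact sub_eq_zero.mp (pow_eq_zero_iff (pow_ne_zero n (Fact.out : p.Prime).ne_zero) |>.mp h2)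
    have : (α g x : k) = (α x g : k) :=
      (div_eq_one_iff_eq (Units.ne_zero _)).mp hone
    exact Units.ext this
  · have hxC : x ∈ Subgroup.centralizer ({x} : Set G) :=
      Subgroup.mem_centralizer_iff.mpr (fun h hh => by
        rw [Set.mem_singleton_iff] at hh; rw [hh])
    set C := Subgroup.centralizer ({x} : Set G)
    have hmap : Subgroup.map C.subtype (commutator ↥C) = ⁅C, C⁆ := by
      rw [commutator_def, Subgroup.map_commutator, ← MonoidHom.range_eq_map,
        Subgroup.range_subtype]
    have hy : (⟨x, hxC⟩ : ↥C) ∉ commutator ↥C := by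
      intro h
      exact hx (hmap ▸ Subgroup.mem_map_of_mem C.subtype h)
    have hyo : ∃ m : ℕ, orderOf (⟨x, hxC⟩ : ↥C) = p ^ m := by
      refine ⟨n, ?_⟩
      rw [← hn, ← Subgroup.orderOf_coe]
    exact part2 p k (⟨x, hxC⟩ : ↥C) hyo hy
end

section
/- Let G be a finite group and P a Sylow p-subgroup of G such that the center Z(P) is not contained in the derived subgroup P' of P. Then G contains an element x of p-power order with x not contained in the derived subgroup of C_G(x). In particular, this conclusion holds whenever G has a nontrivial abelian Sylow p-subgroup. -/
open Subgroup

theorem strongNonSchur_of_sylow_center_not_le_derived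
    (p : ℕ) [Fact p.Prime] (G : Type*) [Group G] [Fintype G] :
    (∀ P : Sylow p G,
      ¬ Subgroup.center ↥(P : Subgroup G) ≤ commutator ↥(P : Subgroup G) →
      ∃ x : G, (∃ n : ℕ, orderOf x = p ^ n) ∧
        x ∉ ⁅Subgroup.centralizer ({x} : Set G), Subgroup.centralizer ({x} : Set G)⁆) ∧
    -- in particular, the conclusion holds whenever `G` has a nontrivial abelian
    -- Sylow `p`-subgroup
    (∀ P : Sylow p G, (P : Subgroup G) ≠ ⊥ →
      (∀ a b : ↥(P : Subgroup G), a * b = b * a) →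
      ∃ x : G, (∃ n : ℕ, orderOf x = p ^ n) ∧
        x ∉ ⁅Subgroup.centralizer ({x} : Set G), Subgroup.centralizer ({x} : Set G)⁆) := by
  have main : ∀ P : Sylow p G,
      ¬ Subgroup.center ↥(P : Subgroup G) ≤ commutator ↥(P : Subgroup G) →
      ∃ x : G, (∃ n : ℕ, orderOf x = p ^ n) ∧
        x ∉ ⁅Subgroup.centralizer ({x} : Set G), Subgroup.centralizer ({x} : Set G)⁆ := by
    intro P hP
    obtain ⟨z, hzc, hznc⟩ := SetLike.not_le_iff_exists.mp hP
    obtain ⟨k, hk⟩ := IsPGroup.iff_orderOf.mp P.2 z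
    set x : G := (z : G) with hx
    have hordx : orderOf x = p ^ k := by
      rw [hx, ← hk]
      exact orderOf_injective (P : Subgroup G).subtype Subtype.coe_injective z
    refine ⟨x, ⟨k, hordx⟩, ?_⟩
    intro hmem
    set C : Subgroup G := Subgroup.centralizer {x} with hC
    -- P ≤ C
    have hPC : (P : Subgroup G) ≤ C := by
      intro g hg
      rw [hC, Subgroup.mem_centralizer_iff]
      rintro m hm
      rcases hm with rfl
      have := Subgroup.mem_center_iff.mp hzc ⟨g, hg⟩
      exact congrArg Subtype.val this.symm
    have hxC : x ∈ C := hPC z.2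
    set xC : ↥C := ⟨x, hxC⟩ with hxCdef
    -- xC is in the commutator of C
    have hxCcomm : xC ∈ commutator ↥C := by
      have hmap : Subgroup.map C.subtype (commutator ↥C) = ⁅C, C⁆ := by
        rw [commutator_def, Subgroup.map_commutator]
        congr 1 <;> rw [← MonoidHom.range_eq_map, Subgroup.range_subtype]
      obtain ⟨y, hy, hyx⟩ := hmap ▸ hmem
      have : y = xC := Subtype.ext hyx
      rwa [this] at hy
    -- xC is central in C
    have hcomm : ∀ g : ↥C, Commute xC g := by
      intro g
      have := Subgroup.mem_centralizer_iff.mp g.2 x rfl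
      exact Subtype.ext this
    set Q : Subgroup ↥C := (P : Subgroup G).subgroupOf C with hQ
    have hfin : Q.FiniteIndex := inferInstance
    -- transfer
    let f : ↥Q →* Abelianization ↥Q := Abelianization.of
    have key : ∀ (k : ℕ) (g₀ : ↥C), g₀⁻¹ * xC ^ k * g₀ ∈ Q → g₀⁻¹ * xC ^ k * g₀ = xC ^ k := by
      intro j g₀ _
      rw [mul_assoc, ((hcomm g₀).pow_left j).eq, inv_mul_cancel_left]
    have htr := MonoidHom.transfer_eq_pow f xC key
    have hker : MonoidHom.transfer f xC = 1 :=
      Abelianization.commutator_subset_ker (MonoidHom.transfer f) hxCcomm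
    have hxQ : xC ∈ Q := by
      rw [hQ, Subgroup.mem_subgroupOf]
      exact z.2
    set q₀ : ↥Q := ⟨xC, hxQ⟩ with hq₀
    have hpow : f q₀ ^ Q.index = 1 := by
      rw [← map_pow]
      have : (⟨xC ^ Q.index, MonoidHom.transfer_eq_pow_aux xC key⟩ : ↥Q) = q₀ ^ Q.index := by
        ext
        simp [hq₀]
      rw [← this, ← htr, hker]
    -- index is coprime to p
    have hndvd : ¬ p ∣ Q.index := by
      have := (P.subtype hPC).not_dvd_index
      rwa [Sylow.coe_subtype] at this
    -- order of q₀ is a power of p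
    have h1 : orderOf xC = orderOf q₀ := orderOf_injective Q.subtype Subtype.coe_injective q₀
    have h2 : orderOf x = orderOf xC := orderOf_injective C.subtype Subtype.coe_injective xC
    have hordq : orderOf q₀ = p ^ k := by rw [← h1, ← h2, hordx]
    have hq₀pow : f q₀ ^ p ^ k = 1 := by
      rw [← map_pow, ← hordq, pow_orderOf_eq_one, map_one]
    have hone : f q₀ = 1 := by
      have h1 : orderOf (f q₀) ∣ Q.index := orderOf_dvd_of_pow_eq_one hpow
      have h2 : orderOf (f q₀) ∣ p ^ k := orderOf_dvd_of_pow_eq_one hq₀pow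
      have hcop : Nat.Coprime Q.index (p ^ k) :=
        (Fact.out : p.Prime).coprime_pow_of_not_dvd hndvd
      have : orderOf (f q₀) ∣ 1 := hcop ▸ Nat.dvd_gcd h1 h2
      rw [orderOf_eq_one_iff.mp (Nat.dvd_one.mp this)]
    -- hence q₀ ∈ commutator Q
    have hq₀comm : q₀ ∈ commutator ↥Q := by
      exact (QuotientGroup.eq_one_iff q₀).mp hone
    -- transport to P
    have : z ∈ commutator ↥(P : Subgroup G) := by
      let e := Subgroup.subgroupOfEquivOfLe hPC
      have hmap : Subgroup.map e.toMonoidHom (commutator ↥Q) = commutator ↥(P : Subgroup G) := by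
        rw [_root_.commutator_def, _root_.commutator_def, Subgroup.map_commutator,
          Subgroup.map_top_of_surjective _ e.surjective]
      rw [← hmap]
      exact ⟨q₀, hq₀comm, rfl⟩
    exact hznc this
  refine ⟨main, ?_⟩
  intro P hbot hab
  apply main P
  have hcomm : commutator ↥(P : Subgroup G) = ⊥ := by
    rw [_root_.commutator_def, Subgroup.commutator_eq_bot_iff_le_centralizer]
    intro g _
    rw [Subgroup.mem_centralizer_iff]
    intro m _
    exact hab m g
  have hcent : Subgroup.center ↥(P : Subgroup G) = ⊤ := by
    rw [Subgroup.eq_top_iff']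
    intro g
    rw [Subgroup.mem_center_iff]
    intro m
    exact hab m g
  rw [hcomm, hcent]
  intro h
  obtain ⟨a, ha, hane⟩ := (Subgroup.nontrivial_iff_exists_ne_one (P : Subgroup G)).mp
    ((Subgroup.nontrivial_iff_ne_bot _).mpr hbot)
  have := Subgroup.mem_bot.mp (h (Subgroup.mem_top (⟨a, ha⟩ : ↥(P : Subgroup G))))
  exact hane (congrArg Subtype.val this)
end

section
/- Let n ≥ 5 and let p be a prime dividing the order n!/2 of the alternating group A_n. Then A_n contains a weak Non-Schur element x such that for every 2-cocycle α on A_n with values in kˣ and every g ∈ C_{A_n}(x), one has α(g,x) = α(x,g). -/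
namespace NSaux

variable {G : Type*} [Group G] {k : Type*} [Field k]

def IsCocycle (α : G → G → kˣ) : Prop :=
  ∀ a b c, α a b * α (a * b) c = α b c * α a (b * c)

variable {α : G → G → kˣ}

lemma IsCocycle.one_right (hα : IsCocycle α) (a : G) : α a 1 = α 1 1 := by
  have h := hα a 1 1
  simp only [mul_one, one_mul] at h
  exact mul_right_cancel h

lemma IsCocycle.one_left (hα : IsCocycle α) (c : G) : α 1 c = α 1 1 := by
  have h := hα 1 1 c
  simp only [mul_one, one_mul] at h
  exact (mul_right_cancel h).symm

lemma IsCocycle.inv_pair (hα : IsCocycle α) (g : G) : α g g⁻¹ = α g⁻¹ g := by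
  have h := hα g g⁻¹ g
  rw [mul_inv_cancel, inv_mul_cancel, hα.one_left g, hα.one_right g] at h
  exact mul_right_cancel h

@[ext] structure Tw (α : G → G → kˣ) where
  g : G
  t : kˣ

instance : Mul (Tw α) := ⟨fun a b => ⟨a.g * b.g, α a.g b.g * a.t * b.t⟩⟩
instance : One (Tw α) := ⟨⟨1, (α 1 1)⁻¹⟩⟩
instance : Inv (Tw α) := ⟨fun a => ⟨a.g⁻¹, (α 1 1)⁻¹ * (α a.g a.g⁻¹)⁻¹ * a.t⁻¹⟩⟩

@[simp] lemma mul_g (a b : Tw α) : (a * b).g = a.g * b.g := rfl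
@[simp] lemma mul_t (a b : Tw α) : (a * b).t = α a.g b.g * a.t * b.t := rfl
@[simp] lemma one_g : (1 : Tw α).g = 1 := rfl
@[simp] lemma one_t : (1 : Tw α).t = (α 1 1)⁻¹ := rfl
@[simp] lemma inv_g (a : Tw α) : (a⁻¹).g = a.g⁻¹ := rfl
@[simp] lemma inv_t (a : Tw α) : (a⁻¹).t = (α 1 1)⁻¹ * (α a.g a.g⁻¹)⁻¹ * a.t⁻¹ := rfl

abbrev twGroup (hα : IsCocycle α) : Group (Tw α) where
  mul a b := a * b
  one := 1
  inv a := a⁻¹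
  mul_assoc a b c := by
    refine Tw.ext (mul_assoc _ _ _) ?_
    show α (a.g * b.g) c.g * (α a.g b.g * a.t * b.t) * c.t
        = α a.g (b.g * c.g) * a.t * (α b.g c.g * b.t * c.t)
    have h := hα a.g b.g c.g
    have h2 : α (a.g * b.g) c.g = (α a.g b.g)⁻¹ * (α b.g c.g * α a.g (b.g * c.g)) := by
      rw [← h]; group
    rw [h2]
    simp [mul_comm, mul_left_comm, mul_assoc]
  one_mul a := by
    refine Tw.ext (one_mul _) ?_
    show α 1 a.g * (α 1 1)⁻¹ * a.t = a.t
    rw [hα.one_left a.g, mul_inv_cancel, one_mul]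
  mul_one a := by
    refine Tw.ext (mul_one _) ?_
    show α a.g 1 * a.t * (α 1 1)⁻¹ = a.t
    rw [hα.one_right a.g, mul_comm (α 1 1) a.t, mul_assoc, mul_inv_cancel, mul_one]
  inv_mul_cancel a := by
    refine Tw.ext (inv_mul_cancel _) ?_
    show α a.g⁻¹ a.g * ((α 1 1)⁻¹ * (α a.g a.g⁻¹)⁻¹ * a.t⁻¹) * a.t = (α 1 1)⁻¹
    rw [← hα.inv_pair, mul_comm (α 1 1)⁻¹ (α a.g a.g⁻¹)⁻¹]
    group

lemma units_eq_one_of_pow_prime_pow {p : ℕ} [hp : Fact p.Prime] [CharP k p]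
    (e : ℕ) (v : kˣ) (hv : v ^ p ^ e = 1) : v = 1 := by
  have h1 : (v : k) ^ p ^ e = 1 := by
    have := congrArg (Units.val) hv
    push_cast at this; exact this
  have h2 : ((v : k) - 1) ^ p ^ e = 0 := by
    rw [sub_pow_char_pow, h1, one_pow, sub_self]
  have h3 : (v : k) - 1 = 0 := (pow_eq_zero_iff (pow_pos hp.out.pos e).ne').mp h2
  exact Units.ext (by rw [Units.val_one]; linear_combination h3)

open scoped commutatorElement in
lemma alpha_comm (hα : IsCocycle α) (p : ℕ) [Fact p.Prime] [CharP k p] (e : ℕ)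
    (x g : G) (hx : x ^ p ^ e = 1) (hgx : g * x = x * g) : α g x = α x g := by
  letI : Group (Tw α) := twGroup hα
  set N := p ^ e with hN
  let π : Tw α →* G := { toFun := Tw.g, map_one' := rfl, map_mul' := fun _ _ => rfl }
  let ι : kˣ →* Tw α :=
    { toFun := fun t => ⟨1, t * (α 1 1)⁻¹⟩
      map_one' := Tw.ext rfl (one_mul _)
      map_mul' := fun s t => by
        refine Tw.ext (one_mul 1).symm ?_
        show (s * t) * (α 1 1)⁻¹ = α 1 1 * (s * (α 1 1)⁻¹) * (t * (α 1 1)⁻¹)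
        rw [mul_comm (α 1 1) (s * (α 1 1)⁻¹)]; group }
  have hcent : ∀ (t : kˣ) (b : Tw α), ι t * b = b * ι t := by
    intro t b
    refine Tw.ext ?_ ?_
    · show 1 * b.g = b.g * 1; rw [one_mul, mul_one]
    · show α 1 b.g * (t * (α 1 1)⁻¹) * b.t = α b.g 1 * b.t * (t * (α 1 1)⁻¹)
      rw [hα.one_left b.g, hα.one_right b.g]
      simp [mul_comm, mul_left_comm, mul_assoc]
  have hinj : Function.Injective ι := by
    intro s t h
    exact mul_right_cancel (congrArg Tw.t h)
  have hker : ∀ b : Tw α, b.g = 1 → b = ι (b.t * α 1 1) := by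
    intro b hb
    exact Tw.ext hb (mul_inv_cancel_right _ _).symm
  let X : Tw α := ⟨x, 1⟩
  let Gg : Tw α := ⟨g, 1⟩
  have hcg : (⁅Gg, X⁆ : Tw α).g = 1 := by
    show g * x * g⁻¹ * x⁻¹ = 1
    rw [hgx]; group
  set v := (⁅Gg, X⁆ : Tw α).t * α 1 1 with hv
  have hc : ⁅Gg, X⁆ = ι v := hker _ hcg
  have hgN : (X ^ N).g = 1 := by
    have h := map_pow π X N
    have : (X ^ N).g = x ^ N := h
    rw [this, hx]
  set w := (X ^ N).t * α 1 1 with hw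
  have hXN : X ^ N = ι w := hker _ hgN
  have hconj : Gg * X * Gg⁻¹ = ⁅Gg, X⁆ * X := by group
  have h2 : Gg * X ^ N * Gg⁻¹ = ⁅Gg, X⁆ ^ N * X ^ N := by
    have hcomm : Commute (⁅Gg, X⁆ : Tw α) X := by
      show ⁅Gg, X⁆ * X = X * ⁅Gg, X⁆
      rw [hc]; exact hcent v X
    calc Gg * X ^ N * Gg⁻¹ = (Gg * X * Gg⁻¹) ^ N := by rw [conj_pow]
      _ = (⁅Gg, X⁆ * X) ^ N := by rw [hconj]
      _ = ⁅Gg, X⁆ ^ N * X ^ N := hcomm.mul_pow N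
  have h3 : Gg * X ^ N * Gg⁻¹ = X ^ N := by
    rw [hXN, show Gg * ι w = ι w * Gg from (hcent w Gg).symm, mul_inv_cancel_right]
  have h4 : ⁅Gg, X⁆ ^ N = 1 := by
    have := h3.symm.trans h2
    nth_rewrite 1 [show (X ^ N : Tw α) = 1 * X ^ N from (one_mul _).symm] at this
    exact (mul_right_cancel this).symm
  have h5 : v ^ N = 1 := by
    apply hinj
    rw [map_pow ι, ← hc, h4, map_one]
  have h6 : v = 1 := units_eq_one_of_pow_prime_pow e v (hN ▸ h5)
  have h7 : Gg * X = X * Gg := by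
    rw [← commutatorElement_eq_one_iff_mul_comm, hc, h6, map_one]
  have := congrArg Tw.t h7
  show α g x = α x g
  calc α g x = α g x * 1 * 1 := by rw [mul_one, mul_one]
    _ = α x g * 1 * 1 := this
    _ = α x g := by rw [mul_one, mul_one]

open Equiv in
lemma not_mem_commutator {G : Type*} [Group G] {β : Type*} (ρ : G →* Equiv.Perm β)
    (x : G) (a : β) (m : ℕ) (hm0 : m ≠ 0) (hm1 : ¬((m : ℤ) ∣ 1)) (hm2 : ¬((m : ℤ) ∣ 2))
    (h1 : ∀ i : ℤ, (ρ x ^ i) a = a ↔ (m : ℤ) ∣ i)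
    (h2 : ∀ b : β, ρ x b ≠ b → ρ x (ρ x b) ≠ b → ∃ j : ℤ, ((ρ x) ^ j) a = b) :
    x ∉ ⁅Subgroup.centralizer {x}, Subgroup.centralizer {x}⁆ := by
  haveI : NeZero m := ⟨hm0⟩
  set σ := ρ x with hσ
  set C := Subgroup.centralizer ({x} : Set G) with hC
  have hσa : σ a ≠ a := fun h => hm1 ((h1 1).mp (by simpa using h))
  have h2z : (σ ^ (2 : ℤ)) a = σ (σ a) := by
    rw [show (2 : ℤ) = 1 + 1 from rfl, zpow_add, zpow_one]; rfl
  have hσ2a : σ (σ a) ≠ a := fun h => hm2 ((h1 2).mp (h2z.trans h))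
  have hcomm : ∀ g : C, Commute (ρ (g : G)) σ := by
    intro g
    have hx := Subgroup.mem_centralizer_iff.mp g.2 x (Set.mem_singleton x)
    show ρ (g : G) * ρ x = ρ x * ρ (g : G)
    rw [← map_mul, ← map_mul, hx]
  have hga : ∀ (g : C) (b : β), σ (ρ (g : G) b) = ρ (g : G) (σ b) := by
    intro g b
    calc σ (ρ (g : G) b) = (σ * ρ (g : G)) b := rfl
      _ = (ρ (g : G) * σ) b := by rw [(hcomm g).eq]
      _ = ρ (g : G) (σ b) := rfl
  have key : ∀ g : C, ∃ j : ℤ, (σ ^ j) a = ρ (g : G) a := by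
    intro g
    apply h2
    · rw [hga]
      exact fun h => hσa ((ρ (g : G)).injective h)
    · rw [hga, hga]
      exact fun h => hσ2a ((ρ (g : G)).injective h)
  set f : C → ZMod m := fun g => (((key g).choose : ℤ) : ZMod m) with hf
  have wd : ∀ (g : C) (j : ℤ), (σ ^ j) a = ρ (g : G) a → ((j : ZMod m)) = f g := by
    intro g j hj
    have hspec := (key g).choose_spec
    set j0 := (key g).choose with hj0
    have e1 : (σ ^ (-j0 + j)) a = a := by
      rw [zpow_add, Equiv.Perm.mul_apply, hj, ← hspec, ← Equiv.Perm.mul_apply, ← zpow_add,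
        neg_add_cancel, zpow_zero, Equiv.Perm.one_apply]
    have e2 : ((-j0 + j : ℤ) : ZMod m) = 0 :=
      (ZMod.intCast_zmod_eq_zero_iff_dvd _ m).mpr ((h1 _).mp e1)
    push_cast at e2
    have : (j : ZMod m) = (j0 : ZMod m) := by linear_combination e2
    rw [this, hf]
  have fmul : ∀ g h : C, f (g * h) = f g + f h := by
    intro g h
    have hjg := (key g).choose_spec
    have hjh := (key h).choose_spec
    set jg := (key g).choose with hjgd
    set jh := (key h).choose with hjhd
    have hfg : f g = ((jg : ℤ) : ZMod m) := rfl
    have hfh : f h = ((jh : ℤ) : ZMod m) := rfl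
    have hmul : (σ ^ (jh + jg)) a = ρ ((g * h : C) : G) a := by
      have hcz : Commute (ρ (g : G)) (σ ^ jh) := (hcomm g).zpow_right jh
      calc (σ ^ (jh + jg)) a = (σ ^ jh) ((σ ^ jg) a) := by
            rw [zpow_add, Equiv.Perm.mul_apply]
        _ = (σ ^ jh) (ρ (g : G) a) := by rw [hjg]
        _ = (σ ^ jh * ρ (g : G)) a := rfl
        _ = (ρ (g : G) * σ ^ jh) a := by rw [hcz.eq]
        _ = ρ (g : G) ((σ ^ jh) a) := rfl
        _ = ρ (g : G) (ρ (h : G) a) := by rw [hjh]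
        _ = ρ ((g * h : C) : G) a := by
            rw [show ((g * h : C) : G) = (g : G) * (h : G) from rfl, map_mul]
            rfl
    have := (wd (g * h) (jh + jg) hmul).symm
    rw [this, hfg, hfh]
    push_cast
    ring
  let φ : C →* Multiplicative (ZMod m) :=
    MonoidHom.mk' (fun g => Multiplicative.ofAdd (f g)) (fun g h => by
      rw [fmul g h]; rfl)
  have hxC : x ∈ C := by
    rw [hC, Subgroup.mem_centralizer_iff]
    rintro y hy
    rw [Set.mem_singleton_iff] at hy
    rw [hy]
  have hfx : f ⟨x, hxC⟩ = ((1 : ℤ) : ZMod m) :=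
    (wd ⟨x, hxC⟩ 1 (by rw [zpow_one])).symm
  have hne : ((1 : ℤ) : ZMod m) ≠ 0 :=
    fun h => hm1 ((ZMod.intCast_zmod_eq_zero_iff_dvd 1 m).mp h)
  intro hmem
  have heq : (⁅C, C⁆ : Subgroup G) = Subgroup.map C.subtype ⁅(⊤ : Subgroup C), ⊤⁆ := by
    rw [Subgroup.map_commutator, ← MonoidHom.range_eq_map, Subgroup.range_subtype]
  rw [heq] at hmem
  obtain ⟨y, hy, hyx⟩ := hmem
  have hyker : f y = 0 := by
    have hle : (⁅(⊤ : Subgroup C), ⊤⁆ : Subgroup C) ≤ φ.ker := by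
      rw [← commutator_def]
      exact Abelianization.commutator_subset_ker φ
    have h9 : φ y = 1 := MonoidHom.mem_ker.mp (hle hy)
    exact h9
  have hyeq : y = ⟨x, hxC⟩ := Subtype.ext hyx
  rw [hyeq] at hyker
  exact hne (hfx ▸ hyker)

open List in
lemma formPerm_zpow_head_eq_iff {β : Type*} [DecidableEq β] (l : List β) (hl : l.Nodup)
    (h0 : 0 < l.length) (i : ℤ) :
    (l.formPerm ^ i) (l[0]'h0) = l[0]'h0 ↔ (l.length : ℤ) ∣ i := by
  have hone : l.formPerm ^ (l.length : ℤ) = 1 := by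
    rw [zpow_natCast, formPerm_pow_length_eq_one_of_nodup l hl]
  constructor
  · intro h
    have hmod : l.formPerm ^ i = l.formPerm ^ ((i % (l.length : ℤ)).toNat) := by
      conv_lhs => rw [← Int.mul_ediv_add_emod i (l.length : ℤ)]
      rw [zpow_add, zpow_mul, hone, one_zpow, one_mul,
        ← Int.toNat_of_nonneg (Int.emod_nonneg i (by exact_mod_cast h0.ne')), zpow_natCast]
      rw [Int.toNat_of_nonneg (Int.emod_nonneg i (by exact_mod_cast h0.ne'))]
    set r := (i % (l.length : ℤ)).toNat with hr
    have hrlt : r < l.length := by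
      have := Int.emod_lt_of_pos i (show (0:ℤ) < (l.length : ℤ) by exact_mod_cast h0)
      omega
    have hpow := List.formPerm_pow_apply_getElem l hl r 0 h0
    rw [hmod, hpow] at h
    have : (0 + r) % l.length = 0 := (hl.getElem_inj_iff.mp h)
    rw [zero_add, Nat.mod_eq_of_lt hrlt] at this
    have hnn : 0 ≤ i % (l.length : ℤ) := Int.emod_nonneg i (by exact_mod_cast h0.ne')
    have : i % (l.length : ℤ) = 0 := by omega
    exact Int.dvd_of_emod_eq_zero this
  · rintro ⟨t, rfl⟩
    rw [zpow_mul, hone, one_zpow, Equiv.Perm.one_apply]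

open List in
lemma formPerm_zpow_head_mem {β : Type*} [DecidableEq β] (l : List β) (hl : l.Nodup)
    (h0 : 0 < l.length) {b : β} (hb : b ∈ l) :
    ∃ j : ℤ, (l.formPerm ^ j) (l[0]'h0) = b := by
  obtain ⟨k, hk, rfl⟩ := List.mem_iff_getElem.mp hb
  refine ⟨(k : ℤ), ?_⟩
  rw [zpow_natCast, List.formPerm_pow_apply_getElem l hl k 0 h0]
  congr 1
  rw [zero_add, Nat.mod_eq_of_lt hk]

open List Equiv Equiv.Perm in
lemma odd_case (n p : ℕ) [hp : Fact p.Prime] (hodd : Odd p) (hpn : p ≤ n) :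
    ∃ x : ↥(alternatingGroup (Fin n)), orderOf x = p ∧
      x ∉ ⁅Subgroup.centralizer {x}, Subgroup.centralizer {x}⁆ := by
  set l : List (Fin n) := (List.finRange p).map (Fin.castLE hpn) with hldef
  have hnd : l.Nodup := (List.nodup_finRange p).map (Fin.castLE_injective hpn)
  have hlen : l.length = p := by simp [hldef]
  have h0 : 0 < l.length := by rw [hlen]; exact hp.out.pos
  have h2len : 2 ≤ l.length := by rw [hlen]; exact hp.out.two_le
  have hcyc : l.formPerm.IsCycle := List.isCycle_formPerm hnd h2len
  have hs : ∀ y, l ≠ [y] := by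
    intro y hy
    have := congrArg List.length hy
    rw [hlen] at this
    simp at this
    have := hp.out.two_le
    omega
  have hsupp : l.formPerm.support = l.toFinset := List.support_formPerm_of_nodup l hnd hs
  have hcard : l.formPerm.support.card = p := by
    rw [hsupp, List.toFinset_card_of_nodup hnd, hlen]
  have hsign : Equiv.Perm.sign l.formPerm = 1 := by
    rw [hcyc.sign, hcard, hodd.neg_one_pow, neg_neg]
  refine ⟨⟨l.formPerm, Equiv.Perm.mem_alternatingGroup.mpr hsign⟩, ?_, ?_⟩
  · rw [Subgroup.orderOf_mk, hcyc.orderOf, hcard]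
  · have hm1 : ¬((p : ℤ) ∣ 1) := by
      intro h
      have : p ∣ 1 := by exact_mod_cast h
      have := Nat.dvd_one.mp this
      have := hp.out.two_le
      omega
    have hm2 : ¬((p : ℤ) ∣ 2) := by
      intro h
      have h' : p ∣ 2 := by exact_mod_cast h
      have := (Nat.prime_dvd_prime_iff_eq hp.out Nat.prime_two).mp h'
      rw [this] at hodd
      exact (by norm_num : ¬ Odd 2) hodd
    apply not_mem_commutator (alternatingGroup (Fin n)).subtype _ (l[0]'h0) p
      hp.out.ne_zero hm1 hm2
    · intro i
      have h := formPerm_zpow_head_eq_iff l hnd h0 i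
      rw [hlen] at h
      exact h
    · intro b hb _
      have hbl : b ∈ l := by
        by_contra hbl
        exact hb (List.formPerm_apply_of_notMem hbl)
      exact formPerm_zpow_head_mem l hnd h0 hbl

open List Equiv Equiv.Perm in
lemma two_case (n : ℕ) (hn : 6 ≤ n) :
    ∃ x : ↥(alternatingGroup (Fin n)), orderOf x = 4 ∧
      x ∉ ⁅Subgroup.centralizer {x}, Subgroup.centralizer {x}⁆ := by
  have h0n : (0 : ℕ) < n := by omega
  have h1n : (1 : ℕ) < n := by omega
  have h2n : (2 : ℕ) < n := by omega
  have h3n : (3 : ℕ) < n := by omega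
  have h4n : (4 : ℕ) < n := by omega
  have h5n : (5 : ℕ) < n := by omega
  set e0 : Fin n := ⟨0, h0n⟩
  set e1 : Fin n := ⟨1, h1n⟩
  set e2 : Fin n := ⟨2, h2n⟩
  set e3 : Fin n := ⟨3, h3n⟩
  set e4 : Fin n := ⟨4, h4n⟩
  set e5 : Fin n := ⟨5, h5n⟩
  set l4 : List (Fin n) := [e2, e3, e4, e5] with hl4
  set s : Equiv.Perm (Fin n) := Equiv.swap e0 e1 with hsdef
  set c : Equiv.Perm (Fin n) := l4.formPerm with hcdef
  have hnd4 : l4.Nodup := by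
    simp [hl4, List.nodup_cons, Fin.ext_iff, e0, e1, e2, e3, e4, e5]
  have hlen4 : l4.length = 4 := rfl
  have h04 : 0 < l4.length := by omega
  have he01 : e0 ≠ e1 := by simp [Fin.ext_iff]
  have hmem_ne : ∀ b ∈ l4, b ≠ e0 ∧ b ≠ e1 := by
    intro b hb
    simp only [hl4, List.mem_cons, List.not_mem_nil, or_false] at hb
    rcases hb with rfl | rfl | rfl | rfl <;> constructor <;> simp [Fin.ext_iff, e0, e1, e2, e3, e4, e5]
  have hc0 : c e0 = e0 := List.formPerm_apply_of_notMem (by simp [hl4, Fin.ext_iff, e0, e1, e2, e3, e4, e5])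
  have hc1 : c e1 = e1 := List.formPerm_apply_of_notMem (by simp [hl4, Fin.ext_iff, e0, e1, e2, e3, e4, e5])
  have hsfix : ∀ b ∈ l4, s b = b := by
    intro b hb
    exact Equiv.swap_apply_of_ne_of_ne (hmem_ne b hb).1 (hmem_ne b hb).2
  have hdisj : Equiv.Perm.Disjoint s c := by
    intro b
    by_cases hb0 : b = e0
    · right; rw [hb0]; exact hc0
    by_cases hb1 : b = e1
    · right; rw [hb1]; exact hc1
    · left; exact Equiv.swap_apply_of_ne_of_ne hb0 hb1
  have hc_not_mem : ∀ b : Fin n, b ∉ l4 → c b = b := fun b hb =>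
    List.formPerm_apply_of_notMem hb
  have hcyc4 : c.IsCycle := List.isCycle_formPerm hnd4 (by omega)
  have hsupp4 : c.support = l4.toFinset :=
    List.support_formPerm_of_nodup l4 hnd4 (by intro y hy; rw [hy] at hlen4; simp at hlen4)
  have hcard4 : c.support.card = 4 := by
    rw [hsupp4, List.toFinset_card_of_nodup hnd4, hlen4]
  have hordc : orderOf c = 4 := by rw [hcyc4.orderOf, hcard4]
  have hords : orderOf s = 2 := by
    apply orderOf_eq_prime
    · rw [pow_two, hsdef, Equiv.swap_mul_self]
    · intro h
      have := congrArg (fun f => f e0) h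
      simp only [hsdef, Equiv.swap_apply_left, Equiv.Perm.one_apply] at this
      exact he01 this.symm
  set σ : Equiv.Perm (Fin n) := s * c with hσdef
  have hsign : Equiv.Perm.sign σ = 1 := by
    rw [hσdef, map_mul, Equiv.Perm.sign_swap he01, hcyc4.sign, hcard4]
    decide
  have hordσ : orderOf σ = 4 := by
    rw [hdisj.orderOf, hords, hordc]
    decide
  -- powers of σ on points of l4 agree with powers of c
  have hpow_agree : ∀ (i : ℤ) (b : Fin n), b ∈ l4 → (σ ^ i) b = (c ^ i) b := by
    intro i b hb
    rw [hσdef, hdisj.commute.mul_zpow]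
    have hcb : (c ^ i) b ∈ l4 := List.form_perm_zpow_apply_mem_imp_mem l4 b hb i
    show (s ^ i) ((c ^ i) b) = (c ^ i) b
    exact Equiv.Perm.zpow_apply_eq_self_of_apply_eq_self (hsfix _ hcb) i
  have he2l4 : e2 ∈ l4 := by simp [hl4]
  refine ⟨⟨σ, Equiv.Perm.mem_alternatingGroup.mpr hsign⟩, ?_, ?_⟩
  · rw [Subgroup.orderOf_mk, hordσ]
  · apply not_mem_commutator (alternatingGroup (Fin n)).subtype _ e2 4
      (by norm_num) (by norm_num) (by norm_num)
    · intro i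
      have h := formPerm_zpow_head_eq_iff l4 hnd4 h04 i
      rw [hlen4] at h
      have hl40 : l4[0]'h04 = e2 := rfl
      rw [hl40] at h
      rw [show (alternatingGroup (Fin n)).subtype ⟨σ, _⟩ = σ from rfl, hpow_agree i e2 he2l4]
      exact_mod_cast h
    · intro b hb1 hb2
      rw [show (alternatingGroup (Fin n)).subtype ⟨σ, _⟩ = σ from rfl] at hb1 hb2 ⊢
      have hbl4 : b ∈ l4 := by
        by_contra hbl
        by_cases hb0 : b = e0
        · apply hb2
          rw [hb0, show σ e0 = e1 by rw [hσdef]; show s (c e0) = e1; rw [hc0, hsdef, Equiv.swap_apply_left]]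
          rw [show σ e1 = e0 by rw [hσdef]; show s (c e1) = e0; rw [hc1, hsdef, Equiv.swap_apply_right]]
        by_cases hb1' : b = e1
        · apply hb2
          rw [hb1', show σ e1 = e0 by rw [hσdef]; show s (c e1) = e0; rw [hc1, hsdef, Equiv.swap_apply_right]]
          rw [show σ e0 = e1 by rw [hσdef]; show s (c e0) = e1; rw [hc0, hsdef, Equiv.swap_apply_left]]
        · apply hb1
          show s (c b) = b
          rw [hc_not_mem b hbl]
          exact Equiv.swap_apply_of_ne_of_ne hb0 hb1'
      obtain ⟨j, hj⟩ := formPerm_zpow_head_mem l4 hnd4 h04 hbl4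
      refine ⟨j, ?_⟩
      rw [hpow_agree j e2 he2l4]
      exact hj

set_option maxHeartbeats 4000000 in
set_option maxRecDepth 1000000 in
lemma five_case :
    ∃ x : ↥(alternatingGroup (Fin 5)), orderOf x = 2 ∧
      x ∉ ⁅Subgroup.centralizer {x}, Subgroup.centralizer {x}⁆ := by
  have hsign : Equiv.Perm.sign (Equiv.swap (0 : Fin 5) 1 * Equiv.swap 2 3) = 1 := by decide
  set x : ↥(alternatingGroup (Fin 5)) :=
    ⟨Equiv.swap (0 : Fin 5) 1 * Equiv.swap 2 3,
      Equiv.Perm.mem_alternatingGroup.mpr hsign⟩ with hx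
  have hcomm : ∀ g h : Equiv.Perm (Fin 5), Equiv.Perm.sign g = 1 → Equiv.Perm.sign h = 1 →
      g * (Equiv.swap (0 : Fin 5) 1 * Equiv.swap 2 3) = (Equiv.swap (0 : Fin 5) 1 * Equiv.swap 2 3) * g →
      h * (Equiv.swap (0 : Fin 5) 1 * Equiv.swap 2 3) = (Equiv.swap (0 : Fin 5) 1 * Equiv.swap 2 3) * h →
      g * h = h * g := by decide
  refine ⟨x, ?_, ?_⟩
  · rw [hx, Subgroup.orderOf_mk]
    apply orderOf_eq_prime
    · decide
    · decide
  · intro hmem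
    have hab : Subgroup.centralizer ({x} : Set ↥(alternatingGroup (Fin 5))) ≤
        Subgroup.centralizer ((Subgroup.centralizer ({x} : Set ↥(alternatingGroup (Fin 5)))) :
          Set ↥(alternatingGroup (Fin 5))) := by
      intro g hg
      rw [Subgroup.mem_centralizer_iff]
      intro h hh
      have hgx := Subgroup.mem_centralizer_iff.mp hg x (Set.mem_singleton x)
      have hhx := Subgroup.mem_centralizer_iff.mp hh x (Set.mem_singleton x)
      have hgx' : (g : Equiv.Perm (Fin 5)) * ↑x = ↑x * (g : Equiv.Perm (Fin 5)) :=
        (congrArg Subtype.val hgx).symm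
      have hhx' : (h : Equiv.Perm (Fin 5)) * ↑x = ↑x * (h : Equiv.Perm (Fin 5)) :=
        (congrArg Subtype.val hhx).symm
      apply Subtype.ext
      exact hcomm ↑h ↑g (Equiv.Perm.mem_alternatingGroup.mp h.2)
        (Equiv.Perm.mem_alternatingGroup.mp g.2) hhx' hgx'
    rw [← Subgroup.commutator_eq_bot_iff_le_centralizer] at hab
    rw [hab, Subgroup.mem_bot] at hmem
    have : (x : Equiv.Perm (Fin 5)) = 1 := congrArg Subtype.val hmem
    rw [hx] at this
    exact (by decide : Equiv.swap (0 : Fin 5) 1 * Equiv.swap 2 3 ≠ 1) this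

end NSaux

/-- `x` is a weak Non-Schur element for the prime `p`: the `p`-part of `x`
(the unique element `y` of `⟨x⟩` of `p`-power order such that `x * y⁻¹` has order
coprime to `p`) does not lie in the derived subgroup of the centralizer of `x`. -/
def IsWeakNonSchur (p : ℕ) {G : Type*} [Group G] (x : G) : Prop :=
  ∃ y : G, y ∈ Subgroup.zpowers x ∧ (∃ n : ℕ, orderOf y = p ^ n) ∧
    Nat.Coprime (orderOf (x * y⁻¹)) p ∧
    y ∉ ⁅Subgroup.centralizer {x}, Subgroup.centralizer {x}⁆

theorem alternatingGroup_weakNonSchur_alpha_regular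
    (p : ℕ) [Fact p.Prime] (k : Type*) [Field k] [IsAlgClosed k] [CharP k p]
    (n : ℕ) (hn : 5 ≤ n) (hp : p ∣ Nat.card ↥(alternatingGroup (Fin n))) :
    ∃ x : ↥(alternatingGroup (Fin n)), IsWeakNonSchur p x ∧
      ∀ α : ↥(alternatingGroup (Fin n)) → ↥(alternatingGroup (Fin n)) → kˣ,
        (∀ a b c, α a b * α (a * b) c = α b c * α a (b * c)) →
        ∀ g ∈ Subgroup.centralizer ({x} : Set ↥(alternatingGroup (Fin n))),
          α g x = α x g := by
  have hprime : p.Prime := Fact.out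
  obtain ⟨x, e, hord, hnc⟩ : ∃ (x : ↥(alternatingGroup (Fin n))) (e : ℕ),
      orderOf x = p ^ e ∧
      x ∉ ⁅Subgroup.centralizer {x}, Subgroup.centralizer {x}⁆ := by
    rcases hprime.eq_two_or_odd' with h2 | hodd
    · subst h2
      rcases Nat.lt_or_ge n 6 with h6 | h6
      · have hn5 : n = 5 := by omega
        subst hn5
        obtain ⟨x, hord, hnc⟩ := NSaux.five_case
        exact ⟨x, 1, by rw [hord, pow_one], hnc⟩
      · obtain ⟨x, hord, hnc⟩ := NSaux.two_case n h6
        exact ⟨x, 2, by rw [hord]; norm_num, hnc⟩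
    · have hpn : p ≤ n := by
        haveI : Nontrivial (Fin n) :=
          ⟨⟨⟨0, by omega⟩, ⟨1, by omega⟩, by simp [Fin.ext_iff]⟩⟩
        have h1 : p ∣ Fintype.card ↥(alternatingGroup (Fin n)) := by
          rwa [← Nat.card_eq_fintype_card]
        have h2 : p ∣ 2 * Fintype.card ↥(alternatingGroup (Fin n)) := h1.mul_left 2
        rw [two_mul_card_alternatingGroup, Fintype.card_perm, Fintype.card_fin] at h2
        exact (Nat.Prime.dvd_factorial hprime).mp h2
      obtain ⟨x, hord, hnc⟩ := NSaux.odd_case n p hodd hpn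
      exact ⟨x, 1, by rw [hord, pow_one], hnc⟩
  refine ⟨x, ⟨x, Subgroup.mem_zpowers x, ⟨e, hord⟩, ?_, hnc⟩, ?_⟩
  · have h1 : x * x⁻¹ = 1 := mul_inv_cancel x
    rw [h1, orderOf_one]
    exact Nat.coprime_one_left p
  · intro α hα g hg
    have hgx : g * x = x * g := (Subgroup.mem_centralizer_iff.mp hg x (Set.mem_singleton x)).symm
    exact NSaux.alpha_comm hα p e x g (by rw [← hord]; exact pow_orderOf_eq_one x) hgx
end

section
/- Let F be a finite field, n ≥ 2, and let p be a prime dividing the order of G = SL_n(F). Then G contains a weak Non-Schur element x such that for every 2-cocycle α on G with values in kˣ and every g ∈ C_G(x), one has α(g,x) = α(x,g). -/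
namespace NSaux

open Polynomial Matrix

set_option linter.unusedSectionVars false
set_option linter.unusedTactic false


section Cocycle
variable {G : Type*} [Group G] {k : Type*} [Field k]
  (α : G → G → kˣ) (hα : ∀ a b c, α a b * α (a * b) c = α b c * α a (b * c))
include hα

theorem coc_one_right (a : G) : α a 1 = α 1 1 := by
  have h := hα a 1 1
  simp only [mul_one, one_mul] at h
  exact mul_right_cancel h

theorem coc_one_left (c : G) : α 1 c = α 1 1 := by
  have h := hα 1 1 c
  simp only [mul_one, one_mul] at h
  exact (mul_right_cancel h).symm

theorem coc_key {g a b : G} (hga : g * a = a * g) (hgb : g * b = b * g) :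
    (α g (a * b) : k) * α a g * α b g = α (a * b) g * α g a * α g b := by
  have E1 := congrArg (Units.val) (hα g a b)
  have E2 := congrArg (Units.val) (hα a g b)
  have E3 := congrArg (Units.val) (hα a b g)
  push_cast at E1 E2 E3
  rw [← hga] at E2
  rw [← hgb] at E3
  have h2 : (α a b : k) ≠ 0 := Units.ne_zero _
  refine mul_left_cancel₀ h2 ?_
  linear_combination (-((α a g : k) * α b g)) * E1 + ((α g a : k) * α b g) * E2
    - ((α g a : k) * α g b) * E3

theorem coc_pow {g x : G} (hgx : g * x = x * g) (m : ℕ) :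
    ((α g x : k) / α x g) ^ m = (α g (x ^ m) : k) / α (x ^ m) g := by
  induction m with
  | zero =>
      simp only [pow_zero]
      rw [coc_one_right α hα g, coc_one_left α hα g, div_self (Units.ne_zero _)]
  | succ m ih =>
      rw [pow_succ, pow_succ, ih]
      have hgm : g * x ^ m = x ^ m * g := (Commute.pow_right hgx m).eq
      have key := coc_key α hα hgm hgx
      have n1 : (α (x^m) g : k) ≠ 0 := Units.ne_zero _
      have n2 : (α x g : k) ≠ 0 := Units.ne_zero _
      have n3 : (α (x^m * x) g : k) ≠ 0 := Units.ne_zero _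
      field_simp
      linear_combination -key

theorem coc_symm_of_pow_eq_one {p : ℕ} [Fact p.Prime] [CharP k p] {g x : G} (hgx : g * x = x * g)
    {e : ℕ} (hx : x ^ p ^ e = 1) : α g x = α x g := by
  have h := coc_pow α hα hgx (p ^ e)
  rw [hx, coc_one_right α hα g, coc_one_left α hα g, div_self (Units.ne_zero _)] at h
  have : ((α g x : k) / α x g - 1) ^ p ^ e = 0 := by
    rw [sub_pow_char_pow, h, one_pow, sub_self]
  have h1 : (α g x : k) / α x g = 1 :=
    sub_eq_zero.mp ((pow_eq_zero_iff (pow_ne_zero e (Nat.Prime.ne_zero Fact.out))).mp this)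
  have := (div_eq_one_iff_eq (Units.ne_zero _)).mp h1
  exact Units.ext this

end Cocycle

section Mat
variable {F : Type*} [Field F]
variable {μ : F[X]}




variable {F : Type*} [Field F]
variable {μ : F[X]}

set_option linter.unusedSectionVars false





theorem sum_mulVec {m n ι : Type*} [Fintype n]
    (s : Finset ι) (f : ι → Matrix m n F) (v : n → F) :
    (∑ i ∈ s, f i) *ᵥ v = ∑ i ∈ s, f i *ᵥ v :=
  Matrix.sum_mulVec s f v

/-- Companion matrix of a polynomial. -/
def comp (μ : F[X]) : Matrix (Fin μ.natDegree) (Fin μ.natDegree) F :=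
  Matrix.of fun i j => if (j : ℕ) + 1 = μ.natDegree then -μ.coeff (i : ℕ)
    else if (i : ℕ) = (j : ℕ) + 1 then 1 else 0


theorem comp_mulVec_single_of_ne {j : Fin μ.natDegree} (h : (j : ℕ) + 1 ≠ μ.natDegree) :
    comp μ *ᵥ Pi.single j 1 = Pi.single (⟨(j : ℕ) + 1, lt_of_le_of_ne j.2 h⟩ : Fin μ.natDegree) 1 := by
  funext i
  simp only [mulVec_single_one, Matrix.col_apply]
  simp only [comp, Matrix.of_apply, if_neg h, Pi.single_apply]
  by_cases hij : (i : ℕ) = (j : ℕ) + 1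
  · rw [if_pos hij, if_pos (by exact Fin.ext hij)]
  · rw [if_neg hij, if_neg (fun hc => hij (by rw [hc]))]

theorem comp_mulVec_single_last {j : Fin μ.natDegree} (h : (j : ℕ) + 1 = μ.natDegree) :
    comp μ *ᵥ Pi.single j 1 = (fun i : Fin μ.natDegree => -μ.coeff (i : ℕ)) := by
  funext i
  simp only [mulVec_single_one, Matrix.col_apply]
  simp only [comp, Matrix.of_apply, if_pos h]

theorem comp_pow_mulVec (h0 : 0 < μ.natDegree) (k : ℕ) (hk : k < μ.natDegree) :
    (comp μ) ^ k *ᵥ Pi.single (⟨0, h0⟩ : Fin μ.natDegree) 1 = Pi.single (⟨k, hk⟩ : Fin μ.natDegree) 1 := by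
  induction k with
  | zero => rw [pow_zero, one_mulVec]
  | succ k ih =>
      have hk' : k < μ.natDegree := Nat.lt_of_succ_lt hk
      rw [pow_succ', ← mulVec_mulVec, ih hk',
        comp_mulVec_single_of_ne (j := ⟨k, hk'⟩) (by simpa using hk.ne)]

theorem aeval_comp_mulVec_zero (hμ : μ.Monic) (h0 : 0 < μ.natDegree) :
    (aeval (comp μ) μ) *ᵥ Pi.single (⟨0, h0⟩ : Fin μ.natDegree) 1 = 0 := by
  set B := comp μ with hB
  have hμsum := congrArg (aeval B) (μ.as_sum_range' (μ.natDegree + 1) (by omega))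
  rw [map_sum] at hμsum
  rw [hμsum]
  have hsum : (∑ i ∈ Finset.range (μ.natDegree + 1), aeval B (monomial i (μ.coeff i))) *ᵥ
      Pi.single (⟨0, h0⟩ : Fin μ.natDegree) 1
      = ∑ i ∈ Finset.range (μ.natDegree + 1),
          μ.coeff i • ((B ^ i) *ᵥ Pi.single (⟨0, h0⟩ : Fin μ.natDegree) 1) := by
    rw [sum_mulVec]
    refine Finset.sum_congr rfl fun i _ => ?_
    rw [aeval_monomial, ← Algebra.smul_def, smul_mulVec]
  rw [hsum, Finset.sum_range_succ, hμ.coeff_natDegree]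
  have hBd : (B ^ μ.natDegree) *ᵥ Pi.single (⟨0, h0⟩ : Fin μ.natDegree) 1
      = (fun i : Fin μ.natDegree => -μ.coeff (i : ℕ)) := by
    obtain ⟨d', hd'⟩ : ∃ d', μ.natDegree = d' + 1 := ⟨μ.natDegree - 1, by omega⟩
    have hpow : B ^ μ.natDegree = B ^ (d' + 1) := congrArg (fun t => B ^ t) hd'
    rw [hpow, pow_succ', ← mulVec_mulVec, comp_pow_mulVec h0 d' (by omega),
      comp_mulVec_single_last (by simp; omega)]
  rw [hBd]
  have hrest : ∑ i ∈ Finset.range μ.natDegree,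
        μ.coeff i • ((B ^ i) *ᵥ Pi.single (⟨0, h0⟩ : Fin μ.natDegree) 1)
      = fun i : Fin μ.natDegree => μ.coeff (i : ℕ) := by
    rw [← Fin.sum_univ_eq_sum_range
      (fun i => μ.coeff i • ((B ^ i) *ᵥ Pi.single (⟨0, h0⟩ : Fin μ.natDegree) 1))]
    have h1 : ∀ j : Fin μ.natDegree,
        μ.coeff (j : ℕ) • ((B ^ (j : ℕ)) *ᵥ Pi.single (⟨0, h0⟩ : Fin μ.natDegree) 1)
        = Pi.single j (μ.coeff (j : ℕ)) := by
      intro j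
      rw [comp_pow_mulVec h0 (j : ℕ) j.2]
      ext i
      simp only [Pi.single_apply, Pi.smul_apply, Fin.ext_iff, smul_eq_mul]
      split <;> simp
    simp_rw [h1]
    exact Finset.univ_sum_single _
  rw [hrest]
  funext i
  simp

theorem aeval_comp (hμ : μ.Monic) (h0 : 0 < μ.natDegree) : aeval (comp μ) μ = 0 := by
  set B := comp μ with hB
  have hc : Commute (aeval B μ) B := by
    have h1 : aeval B μ * B = aeval B (μ * X) := by rw [_root_.map_mul, aeval_X]
    have h2 : B * aeval B μ = aeval B (X * μ) := by rw [_root_.map_mul, aeval_X]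
    show aeval B μ * B = B * aeval B μ
    rw [h1, h2, mul_comm μ X]
  have hcomm : ∀ k : ℕ, aeval B μ * B ^ k = B ^ k * aeval B μ := fun k => (hc.pow_right k).eq
  ext i j
  have hz : aeval B μ *ᵥ Pi.single j 1 = 0 := by
    have hj : j = (⟨(j : ℕ), j.2⟩ : Fin μ.natDegree) := Fin.ext rfl
    rw [hj, ← comp_pow_mulVec h0 (j : ℕ) j.2, mulVec_mulVec, hcomm, ← mulVec_mulVec,
      aeval_comp_mulVec_zero hμ h0]
    simp
  have h2 := congrFun hz i
  simp only [mulVec_single, mul_one] at h2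
  simpa using h2

theorem comp_pow_eq_one (hμ : μ.Monic) (h0 : 0 < μ.natDegree) {r : ℕ}
    (hdvd : μ ∣ X ^ r - 1) : (comp μ) ^ r = 1 := by
  obtain ⟨t, ht⟩ := hdvd
  have h := congrArg (aeval (comp μ)) ht
  rw [map_sub, _root_.map_one, _root_.map_mul, aeval_comp hμ h0, zero_mul, aeval_X_pow,
    sub_eq_zero] at h
  exact h

/-- centralizer of a matrix with a cyclic vector is commutative -/
theorem commute_of_commute_cyclic {m : Type*} [Fintype m] [DecidableEq m]
    (B A A' : Matrix m m F) (v : m → F)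
    (hcyc : ∀ j : m, ∃ k : ℕ, B ^ k *ᵥ v = Pi.single j 1)
    (hA : A * B = B * A) (hA' : A' * B = B * A') : A * A' = A' * A := by
  classical
  choose kk hkk using hcyc
  set P : Matrix m m F := ∑ j : m, (A *ᵥ v) j • B ^ (kk j) with hP
  have hAB : Commute A B := hA
  have hA'B : Commute A' B := hA'
  have hPB : Commute P B := by
    refine Commute.sum_left _ _ _ fun j _ => ?_
    show Commute ((A *ᵥ v) j • B ^ (kk j)) B
    exact Commute.smul_left ((Commute.refl B).pow_left (kk j)) ((A *ᵥ v) j)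
  have hPv : P *ᵥ v = A *ᵥ v := by
    rw [hP, sum_mulVec]
    have h1 : ∀ j : m, ((A *ᵥ v) j • B ^ (kk j)) *ᵥ v = Pi.single j ((A *ᵥ v) j) := by
      intro j
      rw [smul_mulVec, hkk j]
      ext i
      simp only [Pi.single_apply, Pi.smul_apply, smul_eq_mul]
      split <;> simp
    simp_rw [h1]
    exact Finset.univ_sum_single _
  have hAP : A = P := by
    ext i j
    have h1 : A *ᵥ Pi.single j 1 = P *ᵥ Pi.single j 1 := by
      rw [← hkk j, mulVec_mulVec, mulVec_mulVec, (hAB.pow_right (kk j)).eq,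
        (hPB.pow_right (kk j)).eq, ← mulVec_mulVec, ← mulVec_mulVec, hPv]
    have h2 := congrFun h1 i
    simp only [mulVec_single_one, Matrix.col_apply] at h2
    exact h2
  have hA'P : Commute A' P := by
    refine Commute.sum_right _ _ _ fun j _ => ?_
    show Commute A' ((A *ᵥ v) j • B ^ (kk j))
    exact Commute.smul_right (hA'B.pow_right (kk j)) ((A *ᵥ v) j)
  rw [hAP]
  exact hA'P.symm.eq





theorem aeval_diagonal {m : Type*} [Fintype m] [DecidableEq m] (w : m → F) (q : F[X]) :
    aeval (diagonal w) q = diagonal (fun i => q.eval (w i)) := by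
  induction q using Polynomial.induction_on' with
  | add p q hp hq =>
      rw [map_add, hp, hq, diagonal_add]
      congr 1
      funext i
      simp
  | monomial n a =>
      rw [aeval_monomial, diagonal_pow, Matrix.algebraMap_eq_diagonal, diagonal_mul_diagonal]
      congr 1
      funext i
      simp [Pi.algebraMap_apply, eval_monomial]

theorem pow_fromBlocks {d m : Type*} [Fintype d] [Fintype m] [DecidableEq d] [DecidableEq m]
    (B : Matrix d d F) (D : Matrix m m F) (k : ℕ) :
    (fromBlocks B 0 0 D) ^ k = fromBlocks (B ^ k) 0 0 (D ^ k) := by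
  induction k with
  | zero => simp [fromBlocks_one]
  | succ k ih =>
      rw [pow_succ, pow_succ, pow_succ, ih, fromBlocks_multiply]
      simp

theorem aeval_fromBlocks {d m : Type*} [Fintype d] [Fintype m] [DecidableEq d] [DecidableEq m]
    (B : Matrix d d F) (D : Matrix m m F) (q : F[X]) :
    aeval (fromBlocks B 0 0 D) q = fromBlocks (aeval B q) 0 0 (aeval D q) := by
  induction q using Polynomial.induction_on' with
  | add p q hp hq => rw [map_add, map_add, map_add, hp, hq, fromBlocks_add]; simp
  | monomial n a =>
      rw [aeval_monomial, aeval_monomial, aeval_monomial, ← Algebra.smul_def,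
        ← Algebra.smul_def, ← Algebra.smul_def, pow_fromBlocks, fromBlocks_smul]
      simp

theorem commute_aeval {ι : Type*} [Fintype ι] [DecidableEq ι] {G M : Matrix ι ι F}
    (h : G * M = M * G) (q : F[X]) : G * aeval M q = aeval M q * G := by
  induction q using Polynomial.induction_on' with
  | add p q hp hq => rw [map_add, mul_add, add_mul, hp, hq]
  | monomial n a =>
      rw [aeval_monomial, ← Algebra.smul_def, mul_smul_comm, smul_mul_assoc,
        ((Commute.pow_right (h : Commute G M) n)).eq]

/-- A matrix commuting with `fromBlocks B 0 0 (diagonal w)` is block diagonal with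
    block 1 commuting with `B`, provided some polynomial kills `B` but not the `w i`. -/
theorem blocks_of_commute {d m : Type*} [Fintype d] [Fintype m] [DecidableEq d] [DecidableEq m]
    (B : Matrix d d F) (w : m → F) (μ : F[X]) (hB : aeval B μ = 0)
    (hw : ∀ i, μ.eval (w i) ≠ 0)
    (G : Matrix (d ⊕ m) (d ⊕ m) F) (hG : G * fromBlocks B 0 0 (diagonal w) = fromBlocks B 0 0 (diagonal w) * G) :
    G = fromBlocks G.toBlocks₁₁ 0 0 G.toBlocks₂₂ ∧ G.toBlocks₁₁ * B = B * G.toBlocks₁₁ := by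
  have hZ := commute_aeval hG μ
  rw [aeval_fromBlocks, hB, aeval_diagonal] at hZ
  set E := diagonal (fun i => μ.eval (w i)) with hE
  rw [← fromBlocks_toBlocks G] at hZ
  rw [fromBlocks_multiply, fromBlocks_multiply] at hZ
  have h12 : G.toBlocks₁₂ * E = 0 := by
    have := congrArg toBlocks₁₂ hZ
    simpa using this
  have h21 : E * G.toBlocks₂₁ = 0 := by
    have := congrArg toBlocks₂₁ hZ
    simpa using this.symm
  have hA2 : G.toBlocks₁₂ = 0 := by
    ext i j
    have := congrFun (congrFun h12 i) j
    rw [hE, mul_diagonal] at this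
    simpa using (mul_eq_zero.mp this).resolve_right (hw j)
  have hA3 : G.toBlocks₂₁ = 0 := by
    ext i j
    have := congrFun (congrFun h21 i) j
    rw [hE, diagonal_mul] at this
    simpa using (mul_eq_zero.mp this).resolve_left (hw i)
  constructor
  · conv_lhs => rw [← fromBlocks_toBlocks G]
    rw [hA2, hA3]
  · have hX := hG
    rw [← fromBlocks_toBlocks G, fromBlocks_multiply, fromBlocks_multiply] at hX
    have := congrArg toBlocks₁₁ hX
    simpa [hA2, hA3] using this


theorem natDegree_pos_of_irr (hmonic : μ.Monic) (hirr : Irreducible μ) : 0 < μ.natDegree := by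
  rcases Nat.eq_zero_or_pos μ.natDegree with h | h
  · exact absurd (hmonic.natDegree_eq_zero.mp h ▸ hirr) (by simp [not_irreducible_one])
  · exact h

theorem eq_of_root (hmonic : μ.Monic) (hirr : Irreducible μ) {a : F} (ha : μ.IsRoot a) :
    μ = X - C a := by
  have hdvd : X - C a ∣ μ := dvd_iff_isRoot.mpr ha
  exact (Polynomial.eq_of_monic_of_associated hmonic (monic_X_sub_C a)
    ((irreducible_X_sub_C a).associated_of_dvd hirr hdvd).symm)

theorem comp_det_of_natDegree_one (h : μ.natDegree = 1) :
    (comp μ).det = -μ.coeff 0 := by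
  haveI : Subsingleton (Fin μ.natDegree) := ⟨fun a b => Fin.ext (by omega)⟩
  rw [Matrix.det_eq_elem_of_subsingleton _ (⟨0, by omega⟩ : Fin μ.natDegree)]
  simp [comp, h]

theorem comp_ne_one (hmonic : μ.Monic) (hirr : Irreducible μ) (hμ1 : μ ≠ X - C 1) :
    comp μ ≠ 1 := by
  intro hB
  have h0 : 0 < μ.natDegree := natDegree_pos_of_irr hmonic hirr
  rcases Nat.lt_or_ge 1 μ.natDegree with h1 | h1
  · -- degree ≥ 2 : entry (1,0)
    have := congrFun (congrFun hB ⟨1, h1⟩) ⟨0, h0⟩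
    simp only [comp, Matrix.of_apply] at this
    rw [if_neg (by omega), if_pos (by simp)] at this
    rw [Matrix.one_apply_ne (Fin.ne_of_val_ne (by simp))] at this
    exact one_ne_zero this
  · have hd1 : μ.natDegree = 1 := le_antisymm h1 h0
    have hentry := congrFun (congrFun hB ⟨0, h0⟩) ⟨0, h0⟩
    simp only [comp, Matrix.of_apply] at hentry
    rw [if_pos (by omega), Matrix.one_apply_eq] at hentry
    apply hμ1
    have hXC := hmonic.eq_X_add_C hd1
    rw [hXC]
    have hc : μ.coeff 0 = -1 := by linear_combination -hentry
    rw [hc]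
    simp [sub_eq_add_neg]

set_option maxHeartbeats 1000000 in
theorem exists_good_element (n : ℕ) (hn : 2 ≤ n)
    (hmonic : μ.Monic) (hirr : Irreducible μ) {r : ℕ} (hr : 0 < r)
    (hdvd : μ ∣ X ^ r - 1) (hμ1 : μ ≠ X - C 1) (hroot : ¬ μ.IsRoot (-1))
    (hdeg : μ.natDegree ≤ n) (hdet : μ.natDegree = n → (comp μ).det = 1) :
    ∃ x : Matrix.SpecialLinearGroup (Fin n) F, x ^ r = 1 ∧
      x ∉ ⁅Subgroup.centralizer {x}, Subgroup.centralizer {x}⁆ := by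
  classical
  have h0 : 0 < μ.natDegree := natDegree_pos_of_irr hmonic hirr
  set d := μ.natDegree with hdd
  set B := comp μ with hBB
  have hBr : B ^ r = 1 := comp_pow_eq_one hmonic h0 hdvd
  have hdetB : B.det ≠ 0 := by
    intro h
    have : B.det ^ r = 1 := by rw [← Matrix.det_pow, hBr, Matrix.det_one]
    rw [h, zero_pow hr.ne'] at this
    exact zero_ne_one this
  set ν : F := (B.det)⁻¹ with hν
  have hνr : ν ^ r = 1 := by
    rw [hν, inv_pow, ← Matrix.det_pow, hBr, Matrix.det_one, inv_one]
  have hμone : μ.eval 1 ≠ 0 := by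
    intro h
    exact hμ1 (eq_of_root hmonic hirr h)
  have hμν : μ.eval ν ≠ 0 := by
    intro h
    have hform : μ = X - C ν := eq_of_root hmonic hirr h
    have hd1 : μ.natDegree = 1 := by rw [hform]; simp
    have hdet1 : B.det = ν := by
      rw [hBB, comp_det_of_natDegree_one hd1, hform]
      simp
    have hsq : B.det * B.det = 1 := by
      rw [hdet1, hν]
      nth_rewrite 1 [hdet1]
      rw [hν]
      field_simp
    rcases mul_self_eq_one_iff.mp hsq with h1 | h1
    · apply hμ1
      rw [hform, hν, h1, inv_one]
    · apply hroot
      rw [hform]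
      simp only [IsRoot, eval_sub, eval_X, eval_C]
      rw [hν, h1]
      norm_num
  -- the padding vector
  set m := n - d with hm
  set w : Fin m → F := fun i => if (i : ℕ) = 0 then ν else 1 with hw
  have hwr : ∀ i, w i ^ r = 1 := by
    intro i
    rw [hw]
    dsimp only
    split
    · exact hνr
    · exact one_pow r
  have hwμ : ∀ i, μ.eval (w i) ≠ 0 := by
    intro i
    rw [hw]
    dsimp only
    split
    · exact hμν
    · exact hμone
  have hdm : d + m = n := by omega
  set e : Fin d ⊕ Fin m ≃ Fin n := finSumFinEquiv.trans (finCongr hdm) with he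
  set Φ := Matrix.reindexAlgEquiv F F e with hΦ
  set XX : Matrix (Fin d ⊕ Fin m) (Fin d ⊕ Fin m) F := fromBlocks B 0 0 (diagonal w) with hXX
  set xm : Matrix (Fin n) (Fin n) F := Φ XX with hxm
  have hdetXX : XX.det = 1 := by
    rw [hXX, det_fromBlocks_zero₂₁, Matrix.det_diagonal]
    rcases Nat.lt_or_ge d n with hlt | hge
    · have hmpos : 0 < m := by omega
      have : ∏ i : Fin m, w i = ν := by
        rw [Finset.prod_eq_single (⟨0, hmpos⟩ : Fin m)]
        · simp [hw]
        · intro b _ hb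
          rw [hw]
          dsimp only
          rw [if_neg (by simpa [Fin.ext_iff] using hb)]
        · simp
      rw [this, hν]
      field_simp
    · have hdn : d = n := le_antisymm hdeg hge
      have : ∏ i : Fin m, w i = 1 := by
        have : m = 0 := by omega
        have he : (Finset.univ : Finset (Fin m)) = ∅ := by
          rw [Finset.univ_eq_empty_iff]
          rw [this]
          exact Fin.isEmpty'
        rw [he, Finset.prod_empty]
      rw [this, hdet (hdd ▸ hdn), mul_one]
  have hdetxm : xm.det = 1 := by
    rw [hxm, hΦ, Matrix.reindexAlgEquiv_apply, Matrix.det_reindex_self, hdetXX]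
  set x : Matrix.SpecialLinearGroup (Fin n) F := ⟨xm, hdetxm⟩ with hx
  have hXXr : XX ^ r = 1 := by
    rw [hXX, pow_fromBlocks, hBr, diagonal_pow]
    have : (w ^ r) = fun _ => (1 : F) := by
      funext i
      simpa using hwr i
    rw [this]
    rw [← diagonal_one, ← fromBlocks_one]
    congr
  have hxr : x ^ r = 1 := by
    apply Subtype.ext
    rw [Matrix.SpecialLinearGroup.coe_pow]
    show xm ^ r = _
    rw [hxm, ← map_pow, hXXr, _root_.map_one]
    rfl
  refine ⟨x, hxr, ?_⟩
  -- block decomposition of centralizing matrices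
  have hblocks : ∀ g : Matrix (Fin n) (Fin n) F, g * xm = xm * g →
      Φ.symm g = fromBlocks (Φ.symm g).toBlocks₁₁ 0 0 (Φ.symm g).toBlocks₂₂ ∧
      (Φ.symm g).toBlocks₁₁ * B = B * (Φ.symm g).toBlocks₁₁ := by
    intro g hg
    have hcomm : (Φ.symm g) * XX = XX * (Φ.symm g) := by
      have : Φ.symm (g * xm) = Φ.symm (xm * g) := by rw [hg]
      rw [_root_.map_mul, _root_.map_mul] at this
      rw [hxm] at this
      rw [AlgEquiv.symm_apply_apply] at this
      exact this
    exact blocks_of_commute B w μ (aeval_comp hmonic h0) hwμ _ hcomm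

  have hb11mul : ∀ a b : Matrix (Fin n) (Fin n) F, a * xm = xm * a → b * xm = xm * b →
      (Φ.symm (a * b)).toBlocks₁₁ = (Φ.symm a).toBlocks₁₁ * (Φ.symm b).toBlocks₁₁ := by
    intro a b ha hb
    rw [_root_.map_mul]
    conv_lhs => rw [(hblocks a ha).1, (hblocks b hb).1]
    rw [fromBlocks_multiply]
    simp
  have h1block : (Φ.symm (1 : Matrix (Fin n) (Fin n) F)).toBlocks₁₁ = 1 := by
    rw [_root_.map_one]
    have h := toBlocks_fromBlocks₁₁ (1 : Matrix (Fin d) (Fin d) F) 0 0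
      (1 : Matrix (Fin m) (Fin m) F)
    rw [fromBlocks_one] at h
    exact h
  have hcoex : (x : Matrix (Fin n) (Fin n) F) = xm := rfl
  have hgc : ∀ g : Matrix.SpecialLinearGroup (Fin n) F,
      ((g : Matrix (Fin n) (Fin n) F) * xm = xm * g ↔ g * x = x * g) := by
    intro g
    rw [← hcoex, ← Matrix.SpecialLinearGroup.coe_mul, ← Matrix.SpecialLinearGroup.coe_mul]
    exact ⟨fun h => Subtype.ext h, fun h => congrArg _ h⟩
  set C := Subgroup.centralizer ({x} : Set (Matrix.SpecialLinearGroup (Fin n) F)) with hC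
  have hmemC : ∀ g : Matrix.SpecialLinearGroup (Fin n) F, g ∈ C →
      (g : Matrix (Fin n) (Fin n) F) * xm = xm * g := by
    intro g hg
    have h1 := (Subgroup.mem_centralizer_iff.mp hg) x (Set.mem_singleton x)
    exact (hgc g).mpr h1.symm
  set T : Subgroup (Matrix.SpecialLinearGroup (Fin n) F) :=
    { carrier := {g | (g : Matrix (Fin n) (Fin n) F) * xm = xm * g ∧
        (Φ.symm (g : Matrix (Fin n) (Fin n) F)).toBlocks₁₁ = 1}
      one_mem' := by
        refine ⟨by simp, ?_⟩
        rw [Matrix.SpecialLinearGroup.coe_one]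
        exact h1block
      mul_mem' := by
        intro a b ha hb
        obtain ⟨ha1, ha2⟩ := ha
        obtain ⟨hb1, hb2⟩ := hb
        refine ⟨?_, ?_⟩
        · rw [Matrix.SpecialLinearGroup.coe_mul, mul_assoc, hb1, ← mul_assoc, ha1, mul_assoc]
        · rw [Matrix.SpecialLinearGroup.coe_mul, hb11mul _ _ ha1 hb1, ha2, hb2, one_mul]
      inv_mem' := by
        intro a ha
        obtain ⟨ha1, ha2⟩ := ha
        have hac : Commute a x := (hgc a).mp ha1
        have hinv : ((a⁻¹ : Matrix.SpecialLinearGroup (Fin n) F) :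
            Matrix (Fin n) (Fin n) F) * xm = xm * (a⁻¹ : Matrix.SpecialLinearGroup (Fin n) F) :=
          (hgc a⁻¹).mpr hac.inv_left.eq
        refine ⟨hinv, ?_⟩
        have hmulinv : ((a⁻¹ : Matrix.SpecialLinearGroup (Fin n) F) :
            Matrix (Fin n) (Fin n) F) * (a : Matrix (Fin n) (Fin n) F) = 1 := by
          rw [← Matrix.SpecialLinearGroup.coe_mul, inv_mul_cancel,
            Matrix.SpecialLinearGroup.coe_one]
        have := hb11mul _ _ hinv ha1
        rw [hmulinv, h1block, ha2, mul_one] at this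
        exact this.symm }
    with hT
  have hcyc : ∀ j : Fin μ.natDegree, ∃ k : ℕ,
      B ^ k *ᵥ Pi.single (⟨0, h0⟩ : Fin μ.natDegree) 1 = Pi.single j 1 := by
    intro j
    refine ⟨(j : ℕ), ?_⟩
    rw [comp_pow_mulVec h0 (j : ℕ) j.2]
  have hTle : ⁅C, C⁆ ≤ T := by
    rw [Subgroup.commutator_le]
    intro g1 hg1 g2 hg2
    have hg1' := hmemC g1 hg1
    have hg2' := hmemC g2 hg2
    have hg1inv := hmemC g1⁻¹ (C.inv_mem hg1)
    have hg2inv := hmemC g2⁻¹ (C.inv_mem hg2)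
    have hcomm : (@Bracket.bracket _ _ commutatorElement g1 g2 : Matrix.SpecialLinearGroup (Fin n) F) ∈ C :=
      C.mul_mem (C.mul_mem (C.mul_mem hg1 hg2) (C.inv_mem hg1)) (C.inv_mem hg2)
    refine ⟨hmemC _ hcomm, ?_⟩
    have hco : ((@Bracket.bracket _ _ commutatorElement g1 g2 : Matrix.SpecialLinearGroup (Fin n) F) :
        Matrix (Fin n) (Fin n) F)
        = (g1 : Matrix (Fin n) (Fin n) F) * g2 * (g1⁻¹ : Matrix.SpecialLinearGroup (Fin n) F)
          * (g2⁻¹ : Matrix.SpecialLinearGroup (Fin n) F) := by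
      show ((g1 * g2 * g1⁻¹ * g2⁻¹ : Matrix.SpecialLinearGroup (Fin n) F) :
        Matrix (Fin n) (Fin n) F) = _
      rw [Matrix.SpecialLinearGroup.coe_mul, Matrix.SpecialLinearGroup.coe_mul,
        Matrix.SpecialLinearGroup.coe_mul]
    rw [hco]
    have c12 : (g1 : Matrix (Fin n) (Fin n) F) * g2 * xm = xm * ((g1 : Matrix (Fin n) (Fin n) F) * g2) := by
      rw [mul_assoc, hg2', ← mul_assoc, hg1', mul_assoc]
    have c123 : (g1 : Matrix (Fin n) (Fin n) F) * g2 * (g1⁻¹ : Matrix.SpecialLinearGroup (Fin n) F) * xm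
        = xm * ((g1 : Matrix (Fin n) (Fin n) F) * g2 * (g1⁻¹ : Matrix.SpecialLinearGroup (Fin n) F)) := by
      rw [mul_assoc, hg1inv, ← mul_assoc, c12, mul_assoc]
    rw [hb11mul _ _ c123 hg2inv, hb11mul _ _ c12 hg1inv, hb11mul _ _ hg1' hg2']
    set P1 := (Φ.symm (g1 : Matrix (Fin n) (Fin n) F)).toBlocks₁₁
    set P2 := (Φ.symm (g2 : Matrix (Fin n) (Fin n) F)).toBlocks₁₁
    set Q1 := (Φ.symm ((g1⁻¹ : Matrix.SpecialLinearGroup (Fin n) F) : Matrix (Fin n) (Fin n) F)).toBlocks₁₁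
    set Q2 := (Φ.symm ((g2⁻¹ : Matrix.SpecialLinearGroup (Fin n) F) : Matrix (Fin n) (Fin n) F)).toBlocks₁₁
    have hP1Q1 : P1 * Q1 = 1 := by
      have hm1 : (g1 : Matrix (Fin n) (Fin n) F) *
          ((g1⁻¹ : Matrix.SpecialLinearGroup (Fin n) F) : Matrix (Fin n) (Fin n) F) = 1 := by
        rw [← Matrix.SpecialLinearGroup.coe_mul, mul_inv_cancel, Matrix.SpecialLinearGroup.coe_one]
      have := hb11mul _ _ hg1' hg1inv
      rw [hm1, h1block] at this
      exact this.symm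
    have hP2Q2 : P2 * Q2 = 1 := by
      have hm1 : (g2 : Matrix (Fin n) (Fin n) F) *
          ((g2⁻¹ : Matrix.SpecialLinearGroup (Fin n) F) : Matrix (Fin n) (Fin n) F) = 1 := by
        rw [← Matrix.SpecialLinearGroup.coe_mul, mul_inv_cancel, Matrix.SpecialLinearGroup.coe_one]
      have := hb11mul _ _ hg2' hg2inv
      rw [hm1, h1block] at this
      exact this.symm
    have hswap : P2 * Q1 = Q1 * P2 :=
      commute_of_commute_cyclic B P2 Q1 (Pi.single (⟨0, h0⟩ : Fin μ.natDegree) 1) hcyc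
        (hblocks _ hg2').2 (hblocks _ hg1inv).2
    calc P1 * P2 * Q1 * Q2 = P1 * (P2 * Q1) * Q2 := by rw [mul_assoc P1, ← mul_assoc]
      _ = P1 * (Q1 * P2) * Q2 := by rw [hswap]
      _ = (P1 * Q1) * (P2 * Q2) := by rw [← mul_assoc, mul_assoc (P1 * Q1)]
      _ = 1 := by rw [hP1Q1, hP2Q2, one_mul]
  intro hxmem
  have hxT : x ∈ T := hTle hxmem
  have hblock := hxT.2
  rw [hcoex, hxm, AlgEquiv.symm_apply_apply, hXX, toBlocks_fromBlocks₁₁] at hblock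
  exact comp_ne_one hmonic hirr hμ1 hblock





section Unipotent
variable (F : Type*) [Field F] (p : ℕ) [Fact p.Prime] [CharP F p] (n : ℕ) (hn : 2 ≤ n)

/-- the upper shift matrix -/
def Nm : Matrix (Fin n) (Fin n) F := Matrix.of fun i j => if (i : ℕ) + 1 = (j : ℕ) then 1 else 0

theorem Nm_mulVec_single {a b : Fin n} (h : (a : ℕ) + 1 = (b : ℕ)) :
    Nm F n *ᵥ Pi.single b 1 = Pi.single a 1 := by
  funext i
  simp only [mulVec_single_one, Matrix.col_apply, Nm, Matrix.of_apply, Pi.single_apply]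
  by_cases hib : (i : ℕ) + 1 = (b : ℕ)
  · rw [if_pos hib, if_pos (Fin.ext (by omega))]
  · rw [if_neg hib, if_neg (fun hc => hib (by rw [hc]; exact h))]

theorem Nm_mulVec_single_zero {b : Fin n} (h : (b : ℕ) = 0) :
    Nm F n *ᵥ Pi.single b 1 = 0 := by
  funext i
  simp only [mulVec_single_one, Matrix.col_apply, Nm, Matrix.of_apply]
  rw [if_neg (by omega)]
  rfl

theorem Nm_pow_mulVec (k : ℕ) (a b : Fin n) (h : (a : ℕ) + k = (b : ℕ)) :
    (Nm F n) ^ k *ᵥ Pi.single b 1 = Pi.single a 1 := by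
  induction k generalizing a b with
  | zero =>
      have : a = b := Fin.ext (by omega)
      rw [this, pow_zero, one_mulVec]
  | succ k ih =>
      set mid : Fin n := ⟨(a : ℕ) + k, by omega⟩ with hmid
      rw [pow_succ, ← mulVec_mulVec, Nm_mulVec_single F n (a := mid) (by simp [hmid]; omega),
        ih a mid (by simp [hmid])]

theorem Nm_pow_mulVec_zero (k : ℕ) (b : Fin n) (h : (b : ℕ) < k) :
    (Nm F n) ^ k *ᵥ Pi.single b 1 = 0 := by
  induction k generalizing b with
  | zero => omega
  | succ k ih =>
      rcases Nat.eq_zero_or_pos (b : ℕ) with hb | hb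
      · rw [pow_succ, ← mulVec_mulVec, Nm_mulVec_single_zero F n hb, mulVec_zero]
      · set mid : Fin n := ⟨(b : ℕ) - 1, by omega⟩ with hmid
        rw [pow_succ, ← mulVec_mulVec, Nm_mulVec_single F n (a := mid) (by simp [hmid]; omega),
          ih mid (by simp [hmid]; omega)]

theorem Nm_pow_eq_zero {k : ℕ} (h : n ≤ k) : (Nm F n) ^ k = 0 := by
  ext i j
  have hz := congrFun (Nm_pow_mulVec_zero F n k j (by omega)) i
  simp only [mulVec_single, mul_one] at hz
  simpa using hz

include hn in
theorem exists_unipotent :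
    ∃ x : Matrix.SpecialLinearGroup (Fin n) F, x ^ (p ^ n) = 1 ∧
      x ∉ ⁅Subgroup.centralizer {x}, Subgroup.centralizer {x}⁆ := by
  classical
  haveI : Nonempty (Fin n) := ⟨⟨0, by omega⟩⟩
  set N := Nm F n with hN
  set xm : Matrix (Fin n) (Fin n) F := 1 + N with hxm
  have hdet : xm.det = 1 := by
    have htri : xm.BlockTriangular id := by
      intro i j hij
      simp only [hxm, Matrix.add_apply, hN, Nm, Matrix.of_apply]
      rw [Matrix.one_apply_ne (by exact fun hc => absurd hc (by simp at hij ⊢; omega)),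
        if_neg (by simp at hij; omega)]
      simp
    rw [Matrix.det_of_upperTriangular htri]
    have : ∀ i : Fin n, xm i i = 1 := by
      intro i
      simp only [hxm, Matrix.add_apply, hN, Nm, Matrix.of_apply, Matrix.one_apply_eq]
      rw [if_neg (by omega)]
      simp
    simp [this]
  set x : Matrix.SpecialLinearGroup (Fin n) F := ⟨xm, hdet⟩ with hx
  have hxmp : xm ^ (p ^ n) = 1 := by
    have hpow := add_pow_char_pow_of_commute (R := Matrix (Fin n) (Fin n) F) p n
      (Commute.one_left N)
    rw [hxm, hpow, one_pow, Nm_pow_eq_zero F n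
      (le_of_lt (Nat.lt_pow_self (n := n) (Nat.Prime.one_lt Fact.out))), add_zero]
  have hxp : x ^ (p ^ n) = 1 := by
    apply Subtype.ext
    rw [Matrix.SpecialLinearGroup.coe_pow]
    show xm ^ p ^ n = _
    rw [hxmp]
    rfl
  refine ⟨x, hxp, ?_⟩
  have hcyc : ∀ j : Fin n, ∃ k : ℕ,
      N ^ k *ᵥ Pi.single (⟨n - 1, by omega⟩ : Fin n) 1 = Pi.single j 1 := by
    intro j
    refine ⟨n - 1 - (j : ℕ), Nm_pow_mulVec F n _ j ⟨n - 1, by omega⟩ ?_⟩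
    show (j : ℕ) + (n - 1 - (j : ℕ)) = ((⟨n - 1, by omega⟩ : Fin n) : ℕ)
    have : (j : ℕ) < n := j.2
    simp
    omega
  have hcommofN : ∀ g : Matrix (Fin n) (Fin n) F, g * xm = xm * g → g * N = N * g := by
    intro g hg
    rw [hxm, mul_add, add_mul, mul_one, one_mul] at hg
    exact add_left_cancel hg
  have habel : ∀ g h : Matrix.SpecialLinearGroup (Fin n) F,
      g ∈ Subgroup.centralizer {x} → h ∈ Subgroup.centralizer {x} → g * h = h * g := by
    intro g h hg hh
    have hg1 := (Subgroup.mem_centralizer_iff.mp hg) x (Set.mem_singleton x)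
    have hh1 := (Subgroup.mem_centralizer_iff.mp hh) x (Set.mem_singleton x)
    have hgm : (g : Matrix (Fin n) (Fin n) F) * xm = xm * g := by
      have := congrArg (fun z : Matrix.SpecialLinearGroup (Fin n) F =>
        (z : Matrix (Fin n) (Fin n) F)) hg1
      simpa using this.symm
    have hhm : (h : Matrix (Fin n) (Fin n) F) * xm = xm * h := by
      have := congrArg (fun z : Matrix.SpecialLinearGroup (Fin n) F =>
        (z : Matrix (Fin n) (Fin n) F)) hh1
      simpa using this.symm
    have := commute_of_commute_cyclic N (g : Matrix (Fin n) (Fin n) F)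
      (h : Matrix (Fin n) (Fin n) F) (Pi.single (⟨n - 1, by omega⟩ : Fin n) 1) hcyc
      (hcommofN _ hgm) (hcommofN _ hhm)
    apply Subtype.ext
    rw [Matrix.SpecialLinearGroup.coe_mul, Matrix.SpecialLinearGroup.coe_mul]
    exact this
  intro hmem
  have hbot : ⁅Subgroup.centralizer {x}, Subgroup.centralizer {x}⁆ ≤
      (⊥ : Subgroup (Matrix.SpecialLinearGroup (Fin n) F)) := by
    rw [Subgroup.commutator_le]
    intro g1 hg1 g2 hg2
    rw [Subgroup.mem_bot, commutatorElement_eq_one_iff_commute]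
    exact habel g1 g2 hg1 hg2
  have hx1 : x = 1 := Subgroup.mem_bot.mp (hbot hmem)
  have := congrArg (fun z : Matrix.SpecialLinearGroup (Fin n) F =>
    (z : Matrix (Fin n) (Fin n) F) ⟨0, by omega⟩ ⟨1, by omega⟩) hx1
  simp only [hx, hxm] at this
  rw [Matrix.add_apply, Matrix.one_apply_ne (Fin.ne_of_val_ne (by simp))] at this
  simp only [hN, Nm, Matrix.of_apply] at this
  rw [if_pos (by simp)] at this
  rw [Matrix.SpecialLinearGroup.coe_one, Matrix.one_apply_ne (Fin.ne_of_val_ne (by simp))] at this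
  simp at this

end Unipotent






theorem comp_det_of_natDegree_two {μ : F[X]} (h : μ.natDegree = 2) :
    (comp μ).det = μ.coeff 0 := by
  rw [← Matrix.det_reindex_self (finCongr h) (comp μ), Matrix.det_fin_two]
  simp only [reindex_apply, submatrix_apply, comp, Matrix.of_apply, finCongr_symm_apply,
    Fin.coe_cast]
  norm_num [h]

/-- Existence of a suitable irreducible polynomial, odd case. -/
theorem exists_mu_odd [Fintype F] (p : ℕ) [Fact p.Prime] (hp2 : p ≠ 2) (hpF : (p : F) ≠ 0)
    (n : ℕ) (hn : 2 ≤ n)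
    (hdvd : p ∣ Nat.card (Matrix.SpecialLinearGroup (Fin n) F)) :
    ∃ μ : F[X], μ.Monic ∧ Irreducible μ ∧ μ ∣ X ^ p - 1 ∧ μ ≠ X - C 1 ∧
      ¬ μ.IsRoot (-1) ∧ μ.natDegree ≤ n ∧ (μ.natDegree = n → (comp μ).det = 1) := by
  classical
  haveI : Fintype (Matrix.SpecialLinearGroup (Fin n) F) := Fintype.ofFinite _
  obtain ⟨x₀, hx₀⟩ := exists_prime_orderOf_dvd_card
    (G := Matrix.SpecialLinearGroup (Fin n) F) p
    (by rwa [← Nat.card_eq_fintype_card])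
  set M : Matrix (Fin n) (Fin n) F := (x₀ : Matrix (Fin n) (Fin n) F) with hM
  have hM1 : M ≠ 1 := by
    intro h
    have : x₀ = 1 := Subtype.ext h
    rw [this, orderOf_one] at hx₀
    exact (Fact.out : p.Prime).one_lt.ne' hx₀.symm
  have hMp : M ^ p = 1 := by
    have := pow_orderOf_eq_one x₀
    rw [hx₀] at this
    have := congrArg (fun z : Matrix.SpecialLinearGroup (Fin n) F =>
      (z : Matrix (Fin n) (Fin n) F)) this
    simpa [hM] using this
  have haev : aeval M (X ^ p - 1 : F[X]) = 0 := by
    rw [map_sub, aeval_X_pow, _root_.map_one, hMp, sub_self]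
  set f := minpoly F M with hf
  have hMint : IsIntegral F M := Matrix.isIntegral M
  have hf0 : f ≠ 0 := minpoly.ne_zero hMint
  have hfdvd : f ∣ X ^ p - 1 := minpoly.dvd F M haev
  set Φ : F[X] := ∑ i ∈ Finset.range p, X ^ i with hΦ
  have hgeom : Φ * (X - 1) = X ^ p - 1 := geom_sum_mul X p
  have hfnd : ¬ f ∣ (X - 1 : F[X]) := by
    intro hdvd1
    obtain ⟨t, ht⟩ := hdvd1
    have := congrArg (aeval M) ht
    rw [_root_.map_mul, minpoly.aeval, zero_mul, map_sub, aeval_X, _root_.map_one,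
      sub_eq_zero] at this
    exact hM1 this
  set c := EuclideanDomain.gcd f Φ with hc
  have hcne : ¬ IsUnit c := by
    intro hu
    have hcop : IsCoprime f Φ := EuclideanDomain.gcd_isUnit_iff.mp hu
    have : f ∣ (X - 1 : F[X]) :=
      hcop.dvd_of_dvd_mul_left (by rwa [← hgeom] at hfdvd)
    exact hfnd this
  have hc0 : c ≠ 0 := by
    intro h
    rw [hc] at h
    exact hf0 (EuclideanDomain.gcd_eq_zero_iff.mp h).1
  obtain ⟨μ₀, hμ₀irr, hμ₀dvd⟩ := WfDvdMonoid.exists_irreducible_factor hcne hc0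
  have hμ₀0 : μ₀ ≠ 0 := hμ₀irr.ne_zero
  set μ := normalize μ₀ with hμ
  have hassoc : Associated μ₀ μ := (normalize_associated μ₀).symm
  have hmonic : μ.Monic := Polynomial.monic_normalize hμ₀0
  have hirr : Irreducible μ := hassoc.irreducible hμ₀irr
  have hμc : μ ∣ c := (Associated.dvd hassoc.symm).trans hμ₀dvd
  have hμf : μ ∣ f := hμc.trans (EuclideanDomain.gcd_dvd_left f Φ)
  have hμΦ : μ ∣ Φ := hμc.trans (EuclideanDomain.gcd_dvd_right f Φ)
  have hμdvd : μ ∣ X ^ p - 1 := hμf.trans hfdvd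
  have hΦ1 : Φ.eval 1 = (p : F) := by
    rw [hΦ]
    rw [eval_geom_sum]
    simp
  have hμ1 : μ ≠ X - C 1 := by
    intro h
    have : (X - C 1 : F[X]) ∣ Φ := h ▸ hμΦ
    obtain ⟨t, ht⟩ := this
    have := congrArg (eval 1) ht
    rw [eval_mul, eval_sub, eval_X, eval_C, sub_self, zero_mul, hΦ1] at this
    exact hpF this
  have hdeg : μ.natDegree ≤ n := by
    have hchar : f ∣ M.charpoly := minpoly.dvd F M (Matrix.aeval_self_charpoly M)
    have hne : M.charpoly ≠ 0 := (Matrix.charpoly_monic M).ne_zero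
    have := Polynomial.natDegree_le_of_dvd (hμf.trans hchar) hne
    rwa [Matrix.charpoly_natDegree_eq_dim, Fintype.card_fin] at this
  have h0 : 0 < μ.natDegree := by
    rcases Nat.eq_zero_or_pos μ.natDegree with h | h
    · exact absurd (hmonic.natDegree_eq_zero.mp h ▸ hirr)
        (by simp [not_irreducible_one])
    · exact h
  have hodd : Odd p := (Fact.out : p.Prime).odd_of_ne_two hp2
  have hroot : ¬ μ.IsRoot (-1) := by
    intro h
    obtain ⟨t, ht⟩ := hμdvd
    have : ((-1 : F)) ^ p - 1 = 0 := by
      have h3 : eval (-1) μ = 0 := h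
      have h2 := congrArg (eval (-1)) ht
      rw [eval_mul, h3, zero_mul, eval_sub, eval_pow, eval_X, eval_one] at h2
      exact h2
    rw [hodd.neg_one_pow] at this
    have h2 : (2 : F) = 0 := by linear_combination -this
    have hm1 : (-1 : F) = 1 := by linear_combination -h2
    rw [hm1] at h
    have : μ = X - C 1 := by
      have hdvd1 : X - C 1 ∣ μ := dvd_iff_isRoot.mpr h
      exact (Polynomial.eq_of_monic_of_associated hmonic (monic_X_sub_C 1)
        ((irreducible_X_sub_C 1).associated_of_dvd hirr hdvd1).symm)
    exact hμ1 this
  refine ⟨μ, hmonic, hirr, hμdvd, hμ1, hroot, hdeg, ?_⟩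
  intro hdn
  by_contra hne
  have hBr : (comp μ) ^ p = 1 := comp_pow_eq_one hmonic h0 hμdvd
  set ζ := (comp μ).det with hζ
  have hζp : ζ ^ p = 1 := by rw [hζ, ← Matrix.det_pow, hBr, Matrix.det_one]
  have hζ1 : ζ ≠ 1 := hne
  have hord : orderOf ζ = p := by
    have hdvd' : orderOf ζ ∣ p := orderOf_dvd_of_pow_eq_one hζp
    rcases ((Fact.out : p.Prime).eq_one_or_self_of_dvd _ hdvd') with h | h
    · exact absurd (orderOf_eq_one_iff.mp h) hζ1
    · exact h
  have hprim : IsPrimitiveRoot ζ p := by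
    constructor
    · exact hζp
    · intro l hl
      rw [← hord]
      exact orderOf_dvd_of_pow_eq_one hl
  have hfact : (X ^ p - 1 : F[X]) = ∏ ζ' ∈ nthRootsFinset p (1 : F), (X - C ζ') :=
    X_pow_sub_one_eq_prod (Fact.out : p.Prime).pos hprim
  have hprime : Prime μ := hirr.prime
  have : μ ∣ ∏ ζ' ∈ nthRootsFinset p (1 : F), (X - C ζ') := hfact ▸ hμdvd
  obtain ⟨ζ', _, hζdvd⟩ := (Prime.dvd_finset_prod_iff hprime _).mp this
  have hle := Polynomial.natDegree_le_of_dvd hζdvd (X_sub_C_ne_zero ζ')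
  rw [natDegree_X_sub_C] at hle
  omega







theorem exists_mu_two (h2F : (2 : F) ≠ 0) (n : ℕ) (hn : 2 ≤ n) :
    ∃ μ : F[X], μ.Monic ∧ Irreducible μ ∧ μ ∣ X ^ 4 - 1 ∧ μ ≠ X - C 1 ∧
      ¬ μ.IsRoot (-1) ∧ μ.natDegree ≤ n ∧ (μ.natDegree = n → (comp μ).det = 1) := by
  classical
  set f : F[X] := X ^ 2 + C 1 with hf
  have hfmonic : f.Monic := monic_X_pow_add_C 1 (by norm_num)
  have hfdeg : f.natDegree = 2 := natDegree_X_pow_add_C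
  have hf0 : f ≠ 0 := hfmonic.ne_zero
  have hfnu : ¬ IsUnit f := by
    intro hu
    have := Polynomial.natDegree_eq_zero_of_isUnit hu
    omega
  obtain ⟨μ₀, hμ₀irr, hμ₀dvd⟩ := WfDvdMonoid.exists_irreducible_factor hfnu hf0
  have hμ₀0 : μ₀ ≠ 0 := hμ₀irr.ne_zero
  set μ := normalize μ₀ with hμ
  have hassoc : Associated μ₀ μ := (normalize_associated μ₀).symm
  have hmonic : μ.Monic := Polynomial.monic_normalize hμ₀0
  have hirr : Irreducible μ := hassoc.irreducible hμ₀irr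
  have hμfdvd : μ ∣ f := (Associated.dvd hassoc.symm).trans hμ₀dvd
  have hfdvd4 : f ∣ X ^ 4 - 1 := ⟨X ^ 2 - C 1, by rw [hf, Polynomial.C_1]; ring⟩
  have hμdvd : μ ∣ X ^ 4 - 1 := hμfdvd.trans hfdvd4
  have hnoroot : ∀ a : F, μ.IsRoot a → a ^ 2 + 1 = 0 := by
    intro a ha
    obtain ⟨t, ht⟩ := hμfdvd
    have h3 : eval a μ = 0 := ha
    have h2 := congrArg (eval a) ht
    rw [eval_mul, h3, zero_mul, hf, eval_add, eval_pow, eval_X, eval_C] at h2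
    exact h2
  have hμ1 : μ ≠ X - C 1 := by
    intro h
    have : μ.IsRoot 1 := by rw [h]; simp [IsRoot]
    have := hnoroot 1 this
    rw [one_pow] at this
    exact h2F (by linear_combination this)
  have hroot : ¬ μ.IsRoot (-1) := by
    intro h
    have := hnoroot (-1) h
    rw [neg_one_sq] at this
    exact h2F (by linear_combination this)
  have hdeg2 : μ.natDegree ≤ 2 := by
    have := Polynomial.natDegree_le_of_dvd hμfdvd hf0
    omega
  refine ⟨μ, hmonic, hirr, hμdvd, hμ1, hroot, le_trans hdeg2 hn, ?_⟩
  intro hdn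
  have hn2 : n = 2 := by omega
  have hdeg : μ.natDegree = 2 := by omega
  have hμf : μ = f := by
    obtain ⟨t, ht⟩ := hμfdvd
    have ht0 : t ≠ 0 := by
      intro h
      rw [h, mul_zero] at ht
      exact hf0 ht
    have hdegt : t.natDegree = 0 := by
      have := Polynomial.natDegree_mul (hmonic.ne_zero) ht0
      rw [← ht] at this
      omega
    have htmonic : t.Monic := by
      have hlc := congrArg leadingCoeff ht
      rw [leadingCoeff_mul, hmonic.leadingCoeff, one_mul] at hlc
      rw [hfmonic.leadingCoeff] at hlc
      exact hlc.symm
    have ht1 : t = 1 := htmonic.natDegree_eq_zero.mp hdegt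
    rw [ht1, mul_one] at ht
    exact ht.symm
  rw [comp_det_of_natDegree_two hdeg, hμf, hf]
  simp

theorem package_weakNonSchur {G : Type*} [Group G] (p : ℕ) [Fact p.Prime] {x : G} {e : ℕ}
    (hxr : x ^ p ^ e = 1)
    (hxnot : x ∉ ⁅Subgroup.centralizer {x}, Subgroup.centralizer {x}⁆) :
    IsWeakNonSchur p x := by
  refine ⟨x, Subgroup.mem_zpowers x, ?_, ?_, hxnot⟩
  · have hdvd : orderOf x ∣ p ^ e := orderOf_dvd_of_pow_eq_one hxr
    obtain ⟨m, _, hm⟩ := (Nat.dvd_prime_pow Fact.out).mp hdvd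
    exact ⟨m, hm⟩
  · rw [mul_inv_cancel, orderOf_one]
    exact Nat.coprime_one_left p

end Mat
end NSaux

theorem specialLinearGroup_weakNonSchur_alpha_regular
    (p : ℕ) [Fact p.Prime] (k : Type*) [Field k] [IsAlgClosed k] [CharP k p]
    (F : Type*) [Field F] [Fintype F] (n : ℕ) (hn : 2 ≤ n)
    (hp : p ∣ Nat.card (Matrix.SpecialLinearGroup (Fin n) F)) :
    ∃ x : Matrix.SpecialLinearGroup (Fin n) F, IsWeakNonSchur p x ∧
      ∀ α : Matrix.SpecialLinearGroup (Fin n) F →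
            Matrix.SpecialLinearGroup (Fin n) F → kˣ,
        (∀ a b c, α a b * α (a * b) c = α b c * α a (b * c)) →
        ∀ g ∈ Subgroup.centralizer ({x} : Set (Matrix.SpecialLinearGroup (Fin n) F)),
          α g x = α x g := by
  classical
  by_cases hpF : (p : F) = 0
  · haveI : CharP F p := (CharP.charP_iff_prime_eq_zero (Fact.out : p.Prime)).mpr hpF
    obtain ⟨x, hxr, hxnot⟩ := NSaux.exists_unipotent F p n hn
    refine ⟨x, NSaux.package_weakNonSchur p hxr hxnot, ?_⟩
    intro α hα g hg
    have hgx : g * x = x * g :=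
      ((Subgroup.mem_centralizer_iff.mp hg) x (Set.mem_singleton x)).symm
    exact NSaux.coc_symm_of_pow_eq_one α hα hgx hxr
  · by_cases hp2 : p = 2
    · subst hp2
      have h2F : (2 : F) ≠ 0 := by
        intro h
        apply hpF
        rw [show ((2 : ℕ) : F) = (2 : F) by norm_cast]
        exact h
      obtain ⟨μ, hmonic, hirr, hdvd4, hμ1, hroot, hdeg, hdet⟩ := NSaux.exists_mu_two h2F n hn
      obtain ⟨x, hxr, hxnot⟩ := NSaux.exists_good_element n hn hmonic hirr
        (by norm_num : (0 : ℕ) < 4) hdvd4 hμ1 hroot hdeg hdet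
      have hxr' : x ^ (2 : ℕ) ^ (2 : ℕ) = 1 := by
        rw [show (2 : ℕ) ^ (2 : ℕ) = 4 by norm_num]
        exact hxr
      refine ⟨x, NSaux.package_weakNonSchur 2 hxr' hxnot, ?_⟩
      intro α hα g hg
      have hgx : g * x = x * g :=
        ((Subgroup.mem_centralizer_iff.mp hg) x (Set.mem_singleton x)).symm
      exact NSaux.coc_symm_of_pow_eq_one α hα hgx hxr'
    · obtain ⟨μ, hmonic, hirr, hdvdp, hμ1, hroot, hdeg, hdet⟩ :=
        NSaux.exists_mu_odd p hp2 hpF n hn hp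
      obtain ⟨x, hxr, hxnot⟩ := NSaux.exists_good_element n hn hmonic hirr
        (Fact.out : p.Prime).pos hdvdp hμ1 hroot hdeg hdet
      have hxr' : x ^ p ^ (1 : ℕ) = 1 := by rwa [pow_one]
      refine ⟨x, NSaux.package_weakNonSchur p hxr' hxnot, ?_⟩
      intro α hα g hg
      have hgx : g * x = x * g :=
        ((Subgroup.mem_centralizer_iff.mp hg) x (Set.mem_singleton x)).symm
      exact NSaux.coc_symm_of_pow_eq_one α hα hgx hxr'
end
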